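/- arXiv:2101.00533 — 3 statements merged into one kernel-verified Lean document; each statement's English description precedes it below -/
import Mathlib

section
/- Let T be the coupon collector random variable for n types and T_n an independent-mechanism geometric waiting time with parameter 1/n for collecting a coupon of type n. Define the twisted coupon collector time T' to equal T if the last new coupon collected is of type n, and T + T_n otherwise. Then for any C > 0, P(T' > ⌈n log n + Cn⌉) ≤ (e+1) e^{-C/2}. -/
open scoped Classical ENNReal

noncomputable section

open MeasureTheory

/-- Tail bound for the twisted coupon collector time. Let `T` be the coupon collector
time for `n` types (satisfying the tail bound `P(T > ⌈n log n + C'n⌉) ≤ e^{−C'}` for all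
`C' > 0`), let `Tn` be a geometric waiting time of parameter `1/n` (with tail
`P(Tn > m) = (1 − 1/n)^m`), and let `T'` be the twisted coupon collector time, which
satisfies `T' ≤ T + Tn` pointwise. Then for any `C > 0`,
`P(T' > ⌈n log n + Cn⌉) ≤ (e + 1) e^{−C/2}`. -/
theorem twisted_coupon_collector_tail (Ω : Type) [MeasurableSpace Ω]
    (ℙ : Measure Ω) [IsProbabilityMeasure ℙ]
    (n : ℕ) (hn : 1 ≤ n) (T Tn T' : Ω → ℕ)
    (hT : ∀ C' : ℝ, 0 < C' →
      ℙ {ω | ⌈(n : ℝ) * Real.log n + C' * n⌉₊ < T ω} ≤ ENNReal.ofReal (Real.exp (-C')))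
    (hTn : ∀ m : ℕ, ℙ {ω | m < Tn ω} = ENNReal.ofReal ((1 - 1 / (n : ℝ)) ^ m))
    (hle : ∀ ω, T' ω ≤ T ω + Tn ω)
    (C : ℝ) (hC : 0 < C) :
    ℙ {ω | ⌈(n : ℝ) * Real.log n + C * n⌉₊ < T' ω} ≤
      ENNReal.ofReal ((Real.exp 1 + 1) * Real.exp (-C / 2)) := by
  have hn1 : (1:ℝ) ≤ n := by exact_mod_cast hn
  have hnpos : (0:ℝ) < n := by linarith
  set k := ⌈(n : ℝ) * Real.log n + C * n⌉₊ with hkdef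
  set m1 := ⌈(n : ℝ) * Real.log n + (C/2) * n⌉₊ with hm1def
  have hbase : (0:ℝ) ≤ (n:ℝ) * Real.log n :=
    mul_nonneg (by positivity) (Real.log_nonneg hn1)
  have hargC2 : (0:ℝ) ≤ (n:ℝ) * Real.log n + (C/2) * n := by nlinarith
  have hkge : ((n:ℝ) * Real.log n + C * n) ≤ k := Nat.le_ceil _
  have hm1le : (m1:ℝ) ≤ (n:ℝ) * Real.log n + (C/2) * n + 1 :=
    le_of_lt (Nat.ceil_lt_add_one hargC2)
  have hm1k : m1 ≤ k := by
    apply Nat.ceil_le_ceil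
    have : (C/2) * n ≤ C * n := by nlinarith
    linarith
  set d := k - m1 with hddef
  have hdR : (d:ℝ) = (k:ℝ) - m1 := by
    rw [hddef, Nat.cast_sub hm1k]
  have hdge : C * n / 2 - 1 ≤ (d:ℝ) := by rw [hdR]; nlinarith
  -- event inclusion
  have hsub : {ω | k < T' ω} ⊆ {ω | m1 < T ω} ∪ {ω | d < Tn ω} := by
    intro ω hω
    simp only [Set.mem_setOf_eq, Set.mem_union]
    by_contra h
    push_neg at h
    have h1 := hle ω
    have h2 : k < T' ω := hω
    omega
  have hgeom : (1 - 1 / (n:ℝ)) ^ d ≤ Real.exp 1 * Real.exp (-C / 2) := by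
    have h01 : (0:ℝ) ≤ 1 - 1 / n := by
      have : 1 / (n:ℝ) ≤ 1 := by
        rw [div_le_one hnpos]; exact hn1
      linarith
    have hexp : 1 - 1 / (n:ℝ) ≤ Real.exp (-(1/n)) := by
      have := Real.add_one_le_exp (-(1/(n:ℝ)))
      linarith
    calc (1 - 1 / (n:ℝ)) ^ d ≤ (Real.exp (-(1/n))) ^ d := pow_le_pow_left₀ h01 hexp d
      _ = Real.exp (-(d/n)) := by
          rw [← Real.exp_nat_mul]; ring_nf
      _ ≤ Real.exp (1 - C/2) := by
          apply Real.exp_le_exp.2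
          have hdn : C/2 - 1 ≤ (d:ℝ)/n := by
            rw [le_div_iff₀ hnpos]; nlinarith
          linarith
      _ = Real.exp 1 * Real.exp (-C / 2) := by
          rw [← Real.exp_add]; ring_nf
  calc ℙ {ω | k < T' ω} ≤ ℙ ({ω | m1 < T ω} ∪ {ω | d < Tn ω}) := measure_mono hsub
    _ ≤ ℙ {ω | m1 < T ω} + ℙ {ω | d < Tn ω} := measure_union_le _ _
    _ ≤ ENNReal.ofReal (Real.exp (-(C/2))) + ENNReal.ofReal ((1 - 1/(n:ℝ))^d) := by
        gcongr
        · exact hT (C/2) (by linarith)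
        · exact le_of_eq (hTn d)
    _ ≤ ENNReal.ofReal (Real.exp (-(C/2))) + ENNReal.ofReal (Real.exp 1 * Real.exp (-C/2)) := by
        exact add_le_add le_rfl (ENNReal.ofReal_le_ofReal hgeom)
    _ ≤ ENNReal.ofReal ((Real.exp 1 + 1) * Real.exp (-C / 2)) := by
        rw [← ENNReal.ofReal_add (Real.exp_nonneg _) (by positivity)]
        apply ENNReal.ofReal_le_ofReal
        have : -(C/2) = -C/2 := by ring
        rw [this]; ring_nf; exact le_rfl
end
end

section
/- Consider the transpose top with random shuffle on S_n driven by 𝒫 (with 𝒫(id) = 𝒫((i,n)) = 1/n for 1 ≤ i < n), and let 𝔣(π) be the number of fixed points of π. Write E_k for expectation under 𝒫^{*k}. Then ||𝒫^{*k} − U_{S_n}||_TV ≥ 1 − 4(E_k(𝔣²) − (E_k 𝔣)²)/(E_k 𝔣)² − 2/(E_k 𝔣). -/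
open scoped Classical

noncomputable section

/-- Convolution of two functions on a finite group: `(p * q)(x) = ∑_y p(x y⁻¹) q(y)`. -/
def conv {G : Type*} [Group G] [Fintype G] (p q : G → ℝ) : G → ℝ :=
  fun x => ∑ y : G, p (x * y⁻¹) * q y

/-- `k`-fold convolution power of `p` (with `p^{*0}` the point mass at the identity). -/
def convPow {G : Type*} [Group G] [Fintype G] (p : G → ℝ) : ℕ → G → ℝ
  | 0 => fun x => if x = 1 then 1 else 0
  | k + 1 => conv p (convPow p k)

/-- Total variation distance of a measure `μ` on a finite group from the uniform
distribution: `‖μ − U_G‖_TV = (1/2) ∑_x |μ(x) − 1/|G||`. -/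
def tvU {G : Type*} [Group G] [Fintype G] (μ : G → ℝ) : ℝ :=
  (1 / 2) * ∑ x : G, |μ x - 1 / (Fintype.card G : ℝ)|

/-- The driving measure `𝒫` of the transpose top with random shuffle on `S_{n+1}` (top
position `Fin.last n`): mass `1/(n+1)` on the identity and on each transposition
`(i, n)`, `i ≠ n`. -/
def transposeTopP (n : ℕ) : Equiv.Perm (Fin (n + 1)) → ℝ :=
  fun π =>
    if π = 1 ∨ ∃ i : Fin (n + 1), i ≠ Fin.last n ∧ π = Equiv.swap i (Fin.last n) then
      1 / ((n : ℝ) + 1)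
    else 0

/-- The number of fixed points of a permutation. -/
def fixCount {n : ℕ} (π : Equiv.Perm (Fin n)) : ℕ :=
  (Finset.univ.filter fun i => π i = i).card

lemma conv_nonneg' {G : Type*} [Group G] [Fintype G] {p q : G → ℝ}
    (hp : ∀ x, 0 ≤ p x) (hq : ∀ x, 0 ≤ q x) (x : G) : 0 ≤ conv p q x :=
  Finset.sum_nonneg fun y _ => mul_nonneg (hp _) (hq _)

lemma sum_conv {G : Type*} [Group G] [Fintype G] (p q : G → ℝ) :
    ∑ x : G, conv p q x = (∑ x : G, p x) * (∑ x : G, q x) := by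
  have key : ∀ y : G, ∑ x : G, p (x * y⁻¹) = ∑ x : G, p x := fun y =>
    Fintype.sum_equiv (Equiv.mulRight y⁻¹) _ _ (fun x => rfl)
  calc ∑ x : G, conv p q x = ∑ x : G, ∑ y : G, p (x * y⁻¹) * q y := rfl
    _ = ∑ y : G, ∑ x : G, p (x * y⁻¹) * q y := Finset.sum_comm
    _ = ∑ y : G, (∑ x : G, p (x * y⁻¹)) * q y := by
        refine Finset.sum_congr rfl fun y _ => ?_; rw [Finset.sum_mul]
    _ = ∑ y : G, (∑ x : G, p x) * q y := by
        refine Finset.sum_congr rfl fun y _ => ?_; rw [key y]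
    _ = (∑ x : G, p x) * (∑ x : G, q x) := by rw [← Finset.mul_sum]

lemma convPow_nonneg {G : Type*} [Group G] [Fintype G] {p : G → ℝ}
    (hp : ∀ x, 0 ≤ p x) : ∀ k x, 0 ≤ convPow p k x := by
  intro k
  induction k with
  | zero => intro x; simp only [convPow]; positivity
  | succ k ih => intro x; exact conv_nonneg' hp ih x

lemma sum_convPow {G : Type*} [Group G] [Fintype G] {p : G → ℝ}
    (hp : ∑ x : G, p x = 1) : ∀ k, ∑ x : G, convPow p k x = 1 := by
  intro k
  induction k with
  | zero => simp [convPow]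
  | succ k ih => rw [convPow, sum_conv, hp, ih, one_mul]

lemma convPow_one_pos {G : Type*} [Group G] [Fintype G] {p : G → ℝ}
    (hp : ∀ x, 0 ≤ p x) (h1 : 0 < p 1) : ∀ k, 0 < convPow p k 1 := by
  intro k
  induction k with
  | zero => simp [convPow]
  | succ k ih =>
      have hs : p ((1:G) * (1:G)⁻¹) * convPow p k 1 ≤ ∑ y : G, p ((1:G) * y⁻¹) * convPow p k y :=
        Finset.single_le_sum (f := fun y : G => p ((1:G) * y⁻¹) * convPow p k y)
          (fun y _ => mul_nonneg (hp _) (convPow_nonneg hp k y)) (Finset.mem_univ 1)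
      have hpos : 0 < p ((1:G) * (1:G)⁻¹) * convPow p k 1 := by simpa using mul_pos h1 ih
      exact lt_of_lt_of_le hpos hs

lemma transposeTopP_nonneg (n : ℕ) (π : Equiv.Perm (Fin (n + 1))) :
    0 ≤ transposeTopP n π := by
  unfold transposeTopP; split <;> positivity

lemma transposeTopP_one_pos (n : ℕ) : 0 < transposeTopP n 1 := by
  unfold transposeTopP
  rw [if_pos (Or.inl rfl)]
  positivity

lemma sum_transposeTopP (n : ℕ) : ∑ π : Equiv.Perm (Fin (n + 1)), transposeTopP n π = 1 := by
  unfold transposeTopP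
  rw [Finset.sum_ite, Finset.sum_const_zero, add_zero, Finset.sum_const, nsmul_eq_mul]
  have hset : Finset.univ.filter (fun π : Equiv.Perm (Fin (n+1)) =>
      π = 1 ∨ ∃ i : Fin (n + 1), i ≠ Fin.last n ∧ π = Equiv.swap i (Fin.last n)) =
      insert 1 ((Finset.univ.filter (fun i : Fin (n+1) => i ≠ Fin.last n)).image
        fun i => Equiv.swap i (Fin.last n)) := by
    ext π
    simp only [Finset.mem_filter, Finset.mem_univ, true_and, Finset.mem_insert,
      Finset.mem_image]
    constructor
    · rintro (h | ⟨i, hi, rfl⟩)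
      · exact Or.inl h
      · exact Or.inr ⟨i, hi, rfl⟩
    · rintro (h | ⟨i, hi, rfl⟩)
      · exact Or.inl h
      · exact Or.inr ⟨i, hi, rfl⟩
  rw [hset]
  rw [Finset.card_insert_of_notMem, Finset.card_image_of_injOn]
  · have : (Finset.univ.filter (fun i : Fin (n+1) => i ≠ Fin.last n)).card = n := by
      rw [Finset.filter_ne', Finset.card_erase_of_mem (Finset.mem_univ _),
        Finset.card_univ, Fintype.card_fin]
      omega
    rw [this]
    push_cast
    field_simp
  · intro i _ j _ hij
    have := congrArg (fun e : Equiv.Perm (Fin (n+1)) => e (Fin.last n)) hij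
    simpa using this
  · simp only [Finset.mem_image, Finset.mem_filter, Finset.mem_univ, true_and, not_exists]
    rintro i ⟨hi, h⟩
    exact hi (Equiv.swap_eq_one_iff.mp h)

lemma fiber_card (m : ℕ) (i j : Fin m) :
    (Finset.univ.filter fun π : Equiv.Perm (Fin m) => π i = j).card =
    (Finset.univ.filter fun π : Equiv.Perm (Fin m) => π i = i).card := by
  apply Finset.card_bij' (fun π _ => Equiv.swap j i * π) (fun σ _ => Equiv.swap j i * σ)
  · intro π hπ
    simp only [Finset.mem_filter, Finset.mem_univ, true_and] at hπ ⊢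
    simp [hπ]
  · intro σ hσ
    simp only [Finset.mem_filter, Finset.mem_univ, true_and] at hσ ⊢
    simp [hσ]
  · intro π _; simp [← mul_assoc]
  · intro σ _; simp [← mul_assoc]

lemma card_fix_mul (m : ℕ) (i : Fin m) :
    m * (Finset.univ.filter fun π : Equiv.Perm (Fin m) => π i = i).card =
    Fintype.card (Equiv.Perm (Fin m)) := by
  have h := Finset.card_eq_sum_card_fiberwise
    (f := fun π : Equiv.Perm (Fin m) => π i) (s := Finset.univ) (t := Finset.univ)
    (fun x _ => Finset.mem_univ _)
  rw [Finset.card_univ] at h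
  rw [h]
  rw [Finset.sum_congr rfl (fun j _ => fiber_card m i j)]
  rw [Finset.sum_const, Finset.card_univ, Fintype.card_fin, smul_eq_mul]

lemma sum_fixCount (m : ℕ) (hm : 0 < m) :
    ∑ π : Equiv.Perm (Fin m), fixCount π = Fintype.card (Equiv.Perm (Fin m)) := by
  have key : ∀ π : Equiv.Perm (Fin m), fixCount π = ∑ i : Fin m, if π i = i then 1 else 0 :=
    fun π => Finset.card_filter _ _
  have h2 : ∑ π : Equiv.Perm (Fin m), fixCount π =
      ∑ i : Fin m, (Finset.univ.filter fun π : Equiv.Perm (Fin m) => π i = i).card := by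
    rw [Finset.sum_congr rfl (fun π _ => key π), Finset.sum_comm]
    exact Finset.sum_congr rfl fun i _ => (Finset.card_filter _ _).symm
  have h3 : m * ∑ π : Equiv.Perm (Fin m), fixCount π = m * Fintype.card (Equiv.Perm (Fin m)) := by
    rw [h2, Finset.mul_sum, Finset.sum_congr rfl (fun i _ => card_fix_mul m i),
      Finset.sum_const, Finset.card_univ, Fintype.card_fin, smul_eq_mul]
  exact Nat.eq_of_mul_eq_mul_left hm h3


/-- Second-moment lower bound for the transpose top with random shuffle on `S_{n+1}`:
with `𝔣` the number of fixed points and `E_k` the expectation under `𝒫^{*k}`,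
`‖𝒫^{*k} − U‖_TV ≥ 1 − 4(E_k(𝔣²) − (E_k 𝔣)²)/(E_k 𝔣)² − 2/(E_k 𝔣)`. -/
theorem transposeTop_tv_lower_bound (n k : ℕ) :
    1 -
        4 * ((∑ π : Equiv.Perm (Fin (n + 1)),
                convPow (transposeTopP n) k π * (fixCount π : ℝ) ^ 2) -
              (∑ π : Equiv.Perm (Fin (n + 1)),
                convPow (transposeTopP n) k π * (fixCount π : ℝ)) ^ 2) /
          (∑ π : Equiv.Perm (Fin (n + 1)),
            convPow (transposeTopP n) k π * (fixCount π : ℝ)) ^ 2 -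
        2 / (∑ π : Equiv.Perm (Fin (n + 1)),
            convPow (transposeTopP n) k π * (fixCount π : ℝ)) ≤
      tvU (convPow (transposeTopP n) k) := by
  set μ : Equiv.Perm (Fin (n + 1)) → ℝ := convPow (transposeTopP n) k with hμdef
  set E := ∑ π : Equiv.Perm (Fin (n + 1)), μ π * (fixCount π : ℝ) with hEdef
  set M2 := ∑ π : Equiv.Perm (Fin (n + 1)), μ π * (fixCount π : ℝ) ^ 2 with hM2def
  have hμ0 : ∀ π, 0 ≤ μ π := convPow_nonneg (transposeTopP_nonneg n) k
  have hμ1 : ∑ π, μ π = 1 := sum_convPow (sum_transposeTopP n) k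
  have hμ1pos : 0 < μ 1 :=
    convPow_one_pos (transposeTopP_nonneg n) (transposeTopP_one_pos n) k
  have hfix1 : (fixCount (1 : Equiv.Perm (Fin (n + 1))) : ℝ) = (n : ℝ) + 1 := by
    simp [fixCount]
  have hE0 : 0 < E := by
    have h1 : (0 : ℝ) < μ 1 * (fixCount (1 : Equiv.Perm (Fin (n + 1))) : ℝ) := by
      rw [hfix1]; positivity
    have h2 : μ 1 * (fixCount (1 : Equiv.Perm (Fin (n + 1))) : ℝ) ≤ E :=
      Finset.single_le_sum
        (fun π _ => mul_nonneg (hμ0 π) (Nat.cast_nonneg _)) (Finset.mem_univ 1)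
    linarith
  set N := (Fintype.card (Equiv.Perm (Fin (n + 1))) : ℝ) with hNdef
  have hN0 : 0 < N := by
    have h := Fintype.card_pos (α := Equiv.Perm (Fin (n + 1)))
    rw [hNdef]
    exact_mod_cast h
  set u := 1 / N with hudef
  have hu0 : 0 ≤ u := le_of_lt (one_div_pos.mpr hN0)
  set A := Finset.univ.filter (fun π : Equiv.Perm (Fin (n + 1)) => E / 2 < (fixCount π : ℝ))
    with hAdef
  -- total mass of uniform
  have husum : ∑ _π : Equiv.Perm (Fin (n + 1)), u = 1 := by
    rw [Finset.sum_const, Finset.card_univ, nsmul_eq_mul, hudef, mul_one_div,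
      div_self (ne_of_gt hN0)]
  -- fixed point sum
  have hfsum : ∑ π : Equiv.Perm (Fin (n + 1)), (fixCount π : ℝ) = N := by
    rw [hNdef]
    exact_mod_cast congrArg (Nat.cast : ℕ → ℝ) (sum_fixCount (n + 1) (Nat.succ_pos n))
  -- Step 1: TV lower bound via the set A
  have hTV : ∑ π ∈ A, (μ π - u) ≤ tvU μ := by
    have hsplit : (∑ π ∈ A, (μ π - u)) + ∑ π ∈ Finset.univ.filter
        (fun π : Equiv.Perm (Fin (n + 1)) => ¬ (E / 2 < (fixCount π : ℝ))), (μ π - u) = 0 := by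
      rw [hAdef, Finset.sum_filter_add_sum_filter_not]
      rw [Finset.sum_sub_distrib, hμ1, husum]; ring
    have habs : (∑ π ∈ A, (μ π - u)) + -(∑ π ∈ Finset.univ.filter
        (fun π : Equiv.Perm (Fin (n + 1)) => ¬ (E / 2 < (fixCount π : ℝ))), (μ π - u)) ≤
        ∑ π : Equiv.Perm (Fin (n + 1)), |μ π - u| := by
      rw [← Finset.sum_filter_add_sum_filter_not Finset.univ
        (fun π : Equiv.Perm (Fin (n + 1)) => E / 2 < (fixCount π : ℝ)) (fun π => |μ π - u|),
        ← Finset.sum_neg_distrib]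
      gcongr with π hπ π hπ
      · exact le_abs_self _
      · exact neg_le_abs _
    have htv : tvU μ = (1 / 2) * ∑ π : Equiv.Perm (Fin (n + 1)), |μ π - u| := rfl
    linarith
  -- Step 2: Chebyshev
  have hvar : ∑ π : Equiv.Perm (Fin (n + 1)), μ π * ((fixCount π : ℝ) - E) ^ 2 = M2 - E ^ 2 := by
    have expand : ∀ π : Equiv.Perm (Fin (n + 1)),
        μ π * ((fixCount π : ℝ) - E) ^ 2 =
          μ π * (fixCount π : ℝ) ^ 2 - 2 * E * (μ π * (fixCount π : ℝ)) + E ^ 2 * μ π := by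
      intro π; ring
    rw [Finset.sum_congr rfl fun π _ => expand π, Finset.sum_add_distrib,
      Finset.sum_sub_distrib, ← Finset.mul_sum, ← Finset.mul_sum, hμ1, ← hEdef, ← hM2def]
    ring
  have hCheb : 1 - 4 * (M2 - E ^ 2) / E ^ 2 ≤ ∑ π ∈ A, μ π := by
    set Ac := Finset.univ.filter
      (fun π : Equiv.Perm (Fin (n + 1)) => ¬ (E / 2 < (fixCount π : ℝ))) with hAcdef
    have hptwise : ∀ π ∈ Ac, μ π * (E ^ 2 / 4) ≤ μ π * ((fixCount π : ℝ) - E) ^ 2 := by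
      intro π hπ
      rw [hAcdef, Finset.mem_filter] at hπ
      have hf : (fixCount π : ℝ) ≤ E / 2 := le_of_not_gt hπ.2
      have : E ^ 2 / 4 ≤ ((fixCount π : ℝ) - E) ^ 2 := by nlinarith [hf, hE0, (by positivity : (0:ℝ) ≤ ((fixCount π : ℝ)))]
      exact mul_le_mul_of_nonneg_left this (hμ0 π)
    have h1 : (∑ π ∈ Ac, μ π) * (E ^ 2 / 4) ≤ ∑ π ∈ Ac, μ π * ((fixCount π : ℝ) - E) ^ 2 := by
      rw [Finset.sum_mul]
      exact Finset.sum_le_sum hptwise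
    have h2 : ∑ π ∈ Ac, μ π * ((fixCount π : ℝ) - E) ^ 2 ≤ M2 - E ^ 2 := by
      rw [← hvar]
      exact Finset.sum_le_sum_of_subset_of_nonneg (Finset.subset_univ _)
        (fun π _ _ => mul_nonneg (hμ0 π) (sq_nonneg _))
    have hAc : ∑ π ∈ Ac, μ π ≤ 4 * (M2 - E ^ 2) / E ^ 2 := by
      have hE2 : 0 < E ^ 2 / 4 := div_pos (pow_pos hE0 2) (by norm_num)
      have h4 : ∑ π ∈ Ac, μ π ≤ (M2 - E ^ 2) / (E ^ 2 / 4) :=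
        (le_div_iff₀ hE2).mpr (le_trans h1 h2)
      have h5 : (M2 - E ^ 2) / (E ^ 2 / 4) = 4 * (M2 - E ^ 2) / E ^ 2 := by
        rw [div_div_eq_mul_div, mul_comm]
      linarith [h4, h5.symm.le, h5.le]
    have hsplitμ : (∑ π ∈ A, μ π) + ∑ π ∈ Ac, μ π = 1 := by
      rw [hAdef, hAcdef, Finset.sum_filter_add_sum_filter_not, hμ1]
    linarith
  -- Step 3: Markov under uniform
  have hMar : ∑ _π ∈ A, u ≤ 2 / E := by
    have hptwise : ∀ π ∈ A, u * (E / 2) ≤ u * (fixCount π : ℝ) := by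
      intro π hπ
      rw [hAdef, Finset.mem_filter] at hπ
      exact mul_le_mul_of_nonneg_left (le_of_lt hπ.2) hu0
    have h1 : (∑ _π ∈ A, u) * (E / 2) ≤ ∑ π ∈ A, u * (fixCount π : ℝ) := by
      rw [Finset.sum_mul]
      exact Finset.sum_le_sum hptwise
    have h2 : ∑ π ∈ A, u * (fixCount π : ℝ) ≤ 1 := by
      calc ∑ π ∈ A, u * (fixCount π : ℝ)
          ≤ ∑ π : Equiv.Perm (Fin (n + 1)), u * (fixCount π : ℝ) :=
            Finset.sum_le_sum_of_subset_of_nonneg (Finset.subset_univ _)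
              (fun π _ _ => mul_nonneg hu0 (Nat.cast_nonneg _))
        _ = u * N := by rw [← Finset.mul_sum, hfsum]
        _ = 1 := by rw [hudef, one_div, inv_mul_cancel₀ (ne_of_gt hN0)]
    have h3 : (∑ _π ∈ A, u) * (E / 2) ≤ 1 := le_trans h1 h2
    have h4 : ∑ _π ∈ A, u ≤ 1 / (E / 2) :=
      (le_div_iff₀ (half_pos hE0)).mpr h3
    have h5 : 1 / (E / 2) = 2 / E := by rw [one_div_div]
    linarith
  -- Combine
  have hcomb : ∑ π ∈ A, (μ π - u) = (∑ π ∈ A, μ π) - ∑ _π ∈ A, u :=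
    Finset.sum_sub_distrib _ _
  linarith
end
end

section
/- For any ε ∈ (0,1), the total variation distance ||P^{*⌊(1−ε) n log n⌋} − U||_TV for the warp-transpose top with random shuffle on G_n ≀ S_n converges to 1 as n → ∞. -/
open scoped Classical

noncomputable section

/-- The action of `S_n` on `G^n` by permuting coordinates: `(π • f) i = f (π⁻¹ i)`. -/
def permAut (n : ℕ) (G : Type*) [Group G] : Equiv.Perm (Fin n) →* MulAut (Fin n → G) where
  toFun π :=
    { toFun := fun f => f ∘ π.symm
      invFun := fun f => f ∘ π
      left_inv := fun f => by ext x; simp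
      right_inv := fun f => by ext x; simp
      map_mul' := fun f g => rfl }
  map_one' := by ext f x; rfl
  map_mul' := fun π σ => by ext f x; rfl

/-- The complete monomial group (wreath product) `G ≀ S_n`, realized as the semidirect
product `G^n ⋊ S_n`, with multiplication
`(g₁,…,g_n; π)(h₁,…,h_n; η) = (g₁ h_{π⁻¹(1)}, …, g_n h_{π⁻¹(n)}; πη)`. -/
abbrev Wreath (n : ℕ) (G : Type*) [Group G] :=
  (Fin n → G) ⋊[permAut n G] Equiv.Perm (Fin n)

instance (n : ℕ) (G : Type*) [Group G] [Fintype G] : Fintype (Wreath n G) :=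
  Fintype.ofEquiv ((Fin n → G) × Equiv.Perm (Fin n))
    { toFun := fun p => ⟨p.1, p.2⟩
      invFun := fun x => (x.1, x.2)
      left_inv := fun p => rfl
      right_inv := fun x => rfl }

/-- `g^{(i)}`: the element of `G ≀ S_n` with entry `g` in position `i`, identity entries
elsewhere, and identity permutation. -/
def sing {n : ℕ} {G : Type*} [Group G] (i : Fin n) (g : G) : Wreath n G :=
  ⟨Pi.mulSingle i g, 1⟩

/-- `(i, j)`: the element of `G ≀ S_n` with all identity entries and permutation part the
transposition `(i, j)` (the identity if `i = j`). -/
def tr {n : ℕ} {G : Type*} [Group G] (i j : Fin n) : Wreath n G :=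
  ⟨1, Equiv.swap i j⟩

/-- The driving measure `P` of the warp-transpose top with random shuffle on `G ≀ S_n`
(with `n + 1` positions, top position `Fin.last n`): mass `1/((n+1)|G|)` on each element
`g^{(n)}` and each `(g⁻¹)^{(i)} g^{(n)} (i, n)` for `g ∈ G`, `i ≠ n`. -/
def warpP (n : ℕ) (G : Type*) [Group G] [Fintype G] : Wreath (n + 1) G → ℝ :=
  fun x =>
    if (∃ g : G, x = sing (Fin.last n) g) ∨
        (∃ (g : G) (i : Fin (n + 1)), i ≠ Fin.last n ∧
          x = sing i g⁻¹ * sing (Fin.last n) g * tr i (Fin.last n)) then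
      1 / (((n : ℝ) + 1) * (Fintype.card G : ℝ))
    else 0

/-- Squared `ℓ²`-distance of a measure `μ` on a finite group from the uniform
distribution: `‖μ − U_G‖₂² = |G| ∑_x (μ(x) − 1/|G|)²`. -/
def l2sqU {G : Type*} [Group G] [Fintype G] (μ : G → ℝ) : ℝ :=
  (Fintype.card G : ℝ) * ∑ x : G, (μ x - 1 / (Fintype.card G : ℝ)) ^ 2
namespace WTS

variable {n : ℕ} {G : Type*} [Group G] [Fintype G]

def emb (n : ℕ) (G : Type*) [Group G] : Fin (n+1) × G → Wreath (n+1) G :=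
  fun p => if p.1 = Fin.last n then sing (Fin.last n) p.2
    else sing p.1 p.2⁻¹ * sing (Fin.last n) p.2 * tr p.1 (Fin.last n)

lemma emb_right (p : Fin (n+1) × G) :
    (emb n G p).right = Equiv.swap p.1 (Fin.last n) := by
  rcases p with ⟨i, g⟩
  by_cases h : i = Fin.last n
  · subst h
    simp [emb, sing, Equiv.swap_self]
    rfl
  · simp [emb, h, sing, tr, SemidirectProduct.mul_right]

lemma emb_left_last (p : Fin (n+1) × G) :
    (emb n G p).left (Fin.last n) = p.2 := by
  rcases p with ⟨i, g⟩
  by_cases h : i = Fin.last n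
  · subst h; simp [emb, sing]
  · simp [emb, h, sing, tr, SemidirectProduct.mul_left, Pi.mulSingle_eq_of_ne (Ne.symm h)]

lemma emb_inj : Function.Injective (emb n G) := by
  intro p q h
  have h2 : Equiv.swap p.1 (Fin.last n) (Fin.last n)
      = Equiv.swap q.1 (Fin.last n) (Fin.last n) := by
    rw [← emb_right, ← emb_right, h]
  simp only [Equiv.swap_apply_right] at h2
  have h3 : p.2 = q.2 := by rw [← emb_left_last, ← emb_left_last, h]
  exact Prod.ext h2 h3

lemma warpP_eq (z : Wreath (n+1) G) :
    warpP n G z = if ∃ p : Fin (n+1) × G, z = emb n G p then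
      1 / (((n : ℝ) + 1) * (Fintype.card G : ℝ)) else 0 := by
  have hiff : ((∃ g : G, z = sing (Fin.last n) g) ∨
      (∃ (g : G) (i : Fin (n + 1)), i ≠ Fin.last n ∧
        z = sing i g⁻¹ * sing (Fin.last n) g * tr i (Fin.last n)))
      ↔ ∃ p : Fin (n+1) × G, z = emb n G p := by
    constructor
    · rintro (⟨g, rfl⟩ | ⟨g, i, hi, rfl⟩)
      · exact ⟨(Fin.last n, g), by simp [emb]⟩
      · exact ⟨(i, g), by simp [emb, hi]⟩
    · rintro ⟨⟨i, g⟩, rfl⟩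
      by_cases h : i = Fin.last n
      · subst h; left; exact ⟨g, by simp [emb]⟩
      · right; exact ⟨g, i, h, by simp [emb, h]⟩
  rw [warpP]
  exact if_congr hiff rfl rfl

lemma sum_warpP_mul (F : Equiv.Perm (Fin (n+1)) → ℝ) :
    ∑ z : Wreath (n+1) G, warpP n G z * F z.right
      = (((n : ℝ) + 1))⁻¹ * ∑ i : Fin (n+1), F (Equiv.swap i (Fin.last n)) := by
  set c : ℝ := 1 / (((n : ℝ) + 1) * (Fintype.card G : ℝ)) with hc
  have step1 : ∀ z : Wreath (n+1) G, warpP n G z * F z.right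
      = ∑ p : Fin (n+1) × G, (if z = emb n G p then c * F z.right else 0) := by
    intro z
    rw [warpP_eq]
    by_cases h : ∃ p, z = emb n G p
    · obtain ⟨p₀, hp₀⟩ := h
      rw [if_pos ⟨p₀, hp₀⟩]
      have hpiff : ∀ p, (z = emb n G p) ↔ (p = p₀) := by
        intro p
        constructor
        · intro hzp
          exact (emb_inj (hzp ▸ hp₀ : emb n G p = emb n G p₀))
        · rintro rfl; exact hp₀
      calc c * F z.right
          = ∑ p : Fin (n+1) × G, (if p = p₀ then c * F z.right else 0) := by
            rw [Finset.sum_ite_eq' Finset.univ p₀ (fun _ => c * F z.right)]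
            simp
        _ = ∑ p : Fin (n+1) × G, (if z = emb n G p then c * F z.right else 0) :=
            Finset.sum_congr rfl fun p _ => (if_congr (hpiff p) rfl rfl).symm
    · rw [if_neg h, zero_mul]
      symm
      apply Finset.sum_eq_zero
      intro p _
      rw [if_neg (fun hzp => h ⟨p, hzp⟩)]
  have hGcard : (0 : ℝ) < (Fintype.card G : ℝ) := by
    exact_mod_cast Fintype.card_pos
  have hN : (0 : ℝ) < (n : ℝ) + 1 := by positivity
  calc ∑ z : Wreath (n+1) G, warpP n G z * F z.right
      = ∑ z : Wreath (n+1) G, ∑ p : Fin (n+1) × G,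
          (if z = emb n G p then c * F z.right else 0) :=
        Finset.sum_congr rfl fun z _ => step1 z
    _ = ∑ p : Fin (n+1) × G, ∑ z : Wreath (n+1) G,
          (if z = emb n G p then c * F z.right else 0) := Finset.sum_comm
    _ = ∑ p : Fin (n+1) × G, c * F (emb n G p).right := by
        refine Finset.sum_congr rfl fun p _ => ?_
        rw [Finset.sum_ite_eq' Finset.univ (emb n G p) (fun z => c * F z.right)]
        simp
    _ = ∑ i : Fin (n+1), ∑ _g : G, c * F (Equiv.swap i (Fin.last n)) := by
        rw [Fintype.sum_prod_type]
        exact Finset.sum_congr rfl fun i _ => Finset.sum_congr rfl fun g _ => by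
          rw [emb_right]
    _ = (((n : ℝ) + 1))⁻¹ * ∑ i : Fin (n+1), F (Equiv.swap i (Fin.last n)) := by
        simp only [Finset.sum_const, Finset.card_univ, nsmul_eq_mul, Finset.mul_sum]
        refine Finset.sum_congr rfl fun i _ => ?_
        rw [hc]
        field_simp
lemma sum_delta {α : Type*} [Fintype α] {P : α → Prop} {inst : ∀ x, Decidable (P x)}
    (a : α) (c : α → ℝ) (h1 : P a) (h0 : ∀ x, P x → x = a) :
    (∑ x : α, if P x then c x else 0) = c a := by
  rw [Finset.sum_eq_single_of_mem a (Finset.mem_univ _)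
    (fun x _ hx => if_neg (fun hp => hx (h0 x hp)))]
  exact if_pos h1

lemma sum_delta_mul {α : Type*} [Fintype α] {P : α → Prop} {inst : ∀ x, Decidable (P x)}
    (a : α) (c : α → ℝ) (h1 : P a) (h0 : ∀ x, P x → x = a) :
    (∑ x : α, (if P x then (1:ℝ) else 0) * c x) = c a := by
  rw [Finset.sum_eq_single_of_mem a (Finset.mem_univ _)
    (fun x _ hx => by rw [if_neg (fun hp => hx (h0 x hp)), zero_mul])]
  rw [if_pos h1, one_mul]

lemma warpP_nonneg (z : Wreath (n+1) G) : 0 ≤ warpP n G z := by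
  rw [warpP_eq]
  split
  · positivity
  · exact le_refl 0

lemma warpP_mass : ∑ z : Wreath (n+1) G, warpP n G z = 1 := by
  have h := sum_warpP_mul (n := n) (G := G) (fun _ => (1 : ℝ))
  simp only [mul_one] at h
  rw [h]
  simp
  rw [mul_comm]
  rw [mul_inv_cancel₀]
  positivity

lemma convPow_nonneg (k : ℕ) (z : Wreath (n+1) G) :
    0 ≤ convPow (warpP n G) k z := by
  induction k generalizing z with
  | zero =>
      simp only [convPow]
      split <;> norm_num
  | succ k ih =>
      rw [convPow, conv]
      exact Finset.sum_nonneg fun y _ => mul_nonneg (warpP_nonneg _) (ih y)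

lemma convPow_mass (k : ℕ) :
    ∑ z : Wreath (n+1) G, convPow (warpP n G) k z = 1 := by
  induction k with
  | zero =>
      simp only [convPow]
      exact sum_delta (1 : Wreath (n+1) G) (fun _ => (1:ℝ)) rfl (fun x h => h)
  | succ k ih =>
      have : ∑ z : Wreath (n+1) G, convPow (warpP n G) (k+1) z
          = ∑ y : Wreath (n+1) G, (∑ x : Wreath (n+1) G, warpP n G (x * y⁻¹))
              * convPow (warpP n G) k y := by
        simp only [convPow]
        unfold conv
        rw [Finset.sum_comm]
        exact Finset.sum_congr rfl fun y _ => by rw [Finset.sum_mul]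
      rw [this]
      have hshift : ∀ y : Wreath (n+1) G, ∑ x : Wreath (n+1) G, warpP n G (x * y⁻¹)
          = ∑ z : Wreath (n+1) G, warpP n G z := by
        intro y
        have := Equiv.sum_comp (Equiv.mulRight y⁻¹) (warpP n G)
        simpa using this
      calc ∑ y : Wreath (n+1) G, (∑ x : Wreath (n+1) G, warpP n G (x * y⁻¹))
              * convPow (warpP n G) k y
          = ∑ y : Wreath (n+1) G, 1 * convPow (warpP n G) k y := by
            exact Finset.sum_congr rfl fun y _ => by rw [hshift y, warpP_mass]
        _ = 1 := by simp only [one_mul]; exact ih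

/-- Expectation of a function of the permutation part under the `k`-step measure. -/
def EE (n : ℕ) (G : Type*) [Group G] [Fintype G]
    (F : Equiv.Perm (Fin (n+1)) → ℝ) (k : ℕ) : ℝ :=
  ∑ x : Wreath (n+1) G, convPow (warpP n G) k x * F x.right

lemma EE_zero (F : Equiv.Perm (Fin (n+1)) → ℝ) : EE n G F 0 = F 1 := by
  unfold EE
  simp only [convPow]
  exact (sum_delta_mul (P := fun x : Wreath (n+1) G => x = 1) (1 : Wreath (n+1) G)
    (fun x => F x.right) rfl (fun x h => h)).trans
      (by rw [SemidirectProduct.one_right])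

lemma EE_step (F : Equiv.Perm (Fin (n+1)) → ℝ) (k : ℕ) :
    EE n G F (k+1)
      = EE n G (fun σ => (((n : ℝ) + 1))⁻¹
          * ∑ i : Fin (n+1), F (Equiv.swap i (Fin.last n) * σ)) k := by
  unfold EE
  simp only [convPow]
  unfold conv
  calc ∑ x : Wreath (n+1) G, (∑ y : Wreath (n+1) G, warpP n G (x * y⁻¹)
          * convPow (warpP n G) k y) * F x.right
      = ∑ x : Wreath (n+1) G, ∑ y : Wreath (n+1) G, warpP n G (x * y⁻¹)
          * convPow (warpP n G) k y * F x.right := by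
        refine Finset.sum_congr rfl fun x _ => ?_
        rw [Finset.sum_mul]
    _ = ∑ y : Wreath (n+1) G, ∑ x : Wreath (n+1) G, warpP n G (x * y⁻¹)
          * convPow (warpP n G) k y * F x.right := Finset.sum_comm
    _ = ∑ y : Wreath (n+1) G, convPow (warpP n G) k y
          * ∑ x : Wreath (n+1) G, warpP n G (x * y⁻¹) * F x.right := by
        refine Finset.sum_congr rfl fun y _ => ?_
        rw [Finset.mul_sum]
        exact Finset.sum_congr rfl fun x _ => by ring
    _ = ∑ y : Wreath (n+1) G, convPow (warpP n G) k y
          * ((((n : ℝ) + 1))⁻¹ * ∑ i : Fin (n+1),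
              F (Equiv.swap i (Fin.last n) * y.right)) := by
        refine Finset.sum_congr rfl fun y _ => ?_
        congr 1
        have hsub : ∑ x : Wreath (n+1) G, warpP n G (x * y⁻¹) * F x.right
            = ∑ z : Wreath (n+1) G, warpP n G z * F (z * y).right := by
          have := Equiv.sum_comp (Equiv.mulRight y)
            (fun x => warpP n G (x * y⁻¹) * F x.right)
          simp only [Equiv.coe_mulRight, mul_inv_cancel_right] at this
          exact this.symm
        rw [hsub]
        have : ∀ z : Wreath (n+1) G, warpP n G z * F (z * y).right
            = warpP n G z * (fun σ => F (σ * y.right)) z.right := by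
          intro z
          rw [SemidirectProduct.mul_right]
        rw [Finset.sum_congr rfl fun z _ => this z]
        exact sum_warpP_mul (fun σ => F (σ * y.right))

lemma EE_mono {F H : Equiv.Perm (Fin (n+1)) → ℝ} (h : ∀ σ, F σ ≤ H σ) (k : ℕ) :
    EE n G F k ≤ EE n G H k :=
  Finset.sum_le_sum fun x _ => mul_le_mul_of_nonneg_left (h _) (convPow_nonneg k x)

lemma EE_const (c : ℝ) (k : ℕ) : EE n G (fun _ => c) k = c := by
  unfold EE
  rw [← Finset.sum_mul, convPow_mass, one_mul]

lemma EE_add (F H : Equiv.Perm (Fin (n+1)) → ℝ) (k : ℕ) :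
    EE n G (fun σ => F σ + H σ) k = EE n G F k + EE n G H k := by
  unfold EE
  rw [← Finset.sum_add_distrib]
  exact Finset.sum_congr rfl fun x _ => mul_add _ _ _

lemma EE_smul (c : ℝ) (F : Equiv.Perm (Fin (n+1)) → ℝ) (k : ℕ) :
    EE n G (fun σ => c * F σ) k = c * EE n G F k := by
  unfold EE
  rw [Finset.mul_sum]
  exact Finset.sum_congr rfl fun x _ => by ring

lemma EE_sum {ι : Type*} [Fintype ι] (F : ι → Equiv.Perm (Fin (n+1)) → ℝ) (k : ℕ) :
    EE n G (fun σ => ∑ i, F i σ) k = ∑ i, EE n G (F i) k := by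
  unfold EE
  rw [Finset.sum_comm]
  exact Finset.sum_congr rfl fun x _ => Finset.mul_sum _ _ _

/-- real-valued indicator -/
def ind (P : Prop) : ℝ := if P then 1 else 0

lemma ind_nonneg (P : Prop) : 0 ≤ ind P := by unfold ind; split <;> norm_num

lemma ind_le_one (P : Prop) : ind P ≤ 1 := by unfold ind; split <;> norm_num

lemma ind_true {P : Prop} (h : P) : ind P = 1 := if_pos h

lemma ind_false {P : Prop} (h : ¬ P) : ind P = 0 := if_neg h

lemma ind_congr {P Q : Prop} (h : P ↔ Q) : ind P = ind Q := by
  by_cases hp : P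
  · rw [ind_true hp, ind_true (h.mp hp)]
  · rw [ind_false hp, ind_false (fun hq => hp (h.mpr hq))]

lemma ind_le_ind {P Q : Prop} (h : P → Q) : ind P ≤ ind Q := by
  unfold ind
  by_cases hp : P
  · rw [if_pos hp, if_pos (h hp)]
  · rw [if_neg hp]; split <;> norm_num

lemma ind_mul_ind (P Q : Prop) : ind P * ind Q = ind (P ∧ Q) := by
  unfold ind
  by_cases hp : P <;> by_cases hq : Q <;> simp [hp, hq]

lemma ind_or_le {P Q R : Prop} (h : P → Q ∨ R) : ind P ≤ ind Q + ind R := by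
  by_cases hp : P
  · rcases h hp with hq | hr
    · rw [ind_true hp, ind_true hq]
      have := ind_nonneg R; linarith
    · rw [ind_true hp, ind_true hr]
      have := ind_nonneg Q; linarith
  · rw [ind_false hp]
    have := ind_nonneg Q; have := ind_nonneg R; linarith

lemma sum_ind_eq_one {α : Type*} [Fintype α] (l₀ : α) :
    ∑ l : α, ind (l = l₀) = 1 := by
  unfold ind
  exact sum_delta l₀ (fun _ => (1:ℝ)) rfl (fun x h => h)

lemma sum_ind_le_one {α : Type*} [Fintype α] {P : α → Prop} (l₀ : α)
    (h : ∀ l, P l → l = l₀) : ∑ l : α, ind (P l) ≤ 1 := by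
  calc ∑ l : α, ind (P l) ≤ ∑ l : α, ind (l = l₀) :=
        Finset.sum_le_sum fun l _ => ind_le_ind (h l)
    _ = 1 := sum_ind_eq_one l₀

lemma sum_ind_le_prop {α : Type*} [Fintype α] {P : α → Prop} {Q : Prop} (l₀ : α)
    (h : ∀ l, P l → l = l₀) (h2 : P l₀ → Q) : ∑ l : α, ind (P l) ≤ ind Q := by
  have hpt : ∀ l : α, ind (P l) ≤ (if l = l₀ then ind Q else 0) := by
    intro l
    by_cases hl : l = l₀
    · subst hl; rw [if_pos rfl]; exact ind_le_ind h2
    · rw [if_neg hl, ind_false (fun hp => hl (h l hp))]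
  calc ∑ l : α, ind (P l) ≤ ∑ l : α, (if l = l₀ then ind Q else 0) :=
        Finset.sum_le_sum fun l _ => hpt l
    _ = ind Q := sum_delta l₀ (fun _ => ind Q) rfl (fun x hx => hx)

lemma sum_ind_ge_card_sub_one {α : Type*} [Fintype α] {P : α → Prop} (l₀ : α)
    (h : ∀ l, l ≠ l₀ → P l) :
    (Fintype.card α : ℝ) - 1 ≤ ∑ l : α, ind (P l) := by
  have hpt : ∀ l : α, 1 - ind (l = l₀) ≤ ind (P l) := by
    intro l
    by_cases hl : l = l₀
    · rw [ind_true hl]; have := ind_nonneg (P l); linarith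
    · rw [ind_false hl, ind_true (h l hl)]; norm_num
  calc (Fintype.card α : ℝ) - 1
      = ∑ l : α, (1 - ind (l = l₀)) := by
        rw [Finset.sum_sub_distrib, sum_ind_eq_one l₀]
        simp
    _ ≤ ∑ l : α, ind (P l) := Finset.sum_le_sum fun l _ => hpt l

lemma sum_ind_le_card_sub_one {α : Type*} [Fintype α] {P : α → Prop} (l₀ : α)
    (h : ¬ P l₀) : ∑ l : α, ind (P l) ≤ (Fintype.card α : ℝ) - 1 := by
  have hpt : ∀ l : α, ind (P l) ≤ 1 - ind (l = l₀) := by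
    intro l
    by_cases hl : l = l₀
    · subst hl; rw [ind_false h, ind_true rfl]; norm_num
    · rw [ind_false hl]; have := ind_le_one (P l); linarith
  calc ∑ l : α, ind (P l) ≤ ∑ l : α, (1 - ind (l = l₀)) :=
        Finset.sum_le_sum fun l _ => hpt l
    _ = (Fintype.card α : ℝ) - 1 := by
        rw [Finset.sum_sub_distrib, sum_ind_eq_one l₀]
        simp

lemma sum_ind_le_card_sub_two {α : Type*} [Fintype α] {P : α → Prop} (l₀ l₁ : α)
    (hne : l₀ ≠ l₁) (h0 : ¬ P l₀) (h1 : ¬ P l₁) :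
    ∑ l : α, ind (P l) ≤ (Fintype.card α : ℝ) - 2 := by
  have hpt : ∀ l : α, ind (P l) ≤ 1 - ind (l = l₀) - ind (l = l₁) := by
    intro l
    by_cases hl0 : l = l₀
    · subst hl0
      rw [ind_false h0, ind_true rfl, ind_false hne]
      norm_num
    · by_cases hl1 : l = l₁
      · subst hl1
        rw [ind_false h1, ind_false hl0, ind_true rfl]
        norm_num
      · rw [ind_false hl0, ind_false hl1]
        have := ind_le_one (P l); linarith
  calc ∑ l : α, ind (P l) ≤ ∑ l : α, (1 - ind (l = l₀) - ind (l = l₁)) :=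
        Finset.sum_le_sum fun l _ => hpt l
    _ = (Fintype.card α : ℝ) - 2 := by
        rw [Finset.sum_sub_distrib, Finset.sum_sub_distrib,
          sum_ind_eq_one l₀, sum_ind_eq_one l₁]
        simp
        ring

lemma sum_ind_eq_zero {α : Type*} [Fintype α] {P : α → Prop} (h : ∀ l, ¬ P l) :
    ∑ l : α, ind (P l) = 0 :=
  Finset.sum_eq_zero fun l _ => ind_false (h l)

/-- averaging operator: one step of the projected walk -/
def TT (n : ℕ) (F : Equiv.Perm (Fin (n+1)) → ℝ) : Equiv.Perm (Fin (n+1)) → ℝ :=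
  fun σ => (((n : ℝ) + 1))⁻¹ * ∑ l : Fin (n+1), F (Equiv.swap l (Fin.last n) * σ)

lemma EE_step' (F : Equiv.Perm (Fin (n+1)) → ℝ) (k : ℕ) :
    EE n G F (k+1) = EE n G (TT n F) k := EE_step F k

lemma TT_apply (n : ℕ) (F : Equiv.Perm (Fin (n+1)) → ℝ) (σ : Equiv.Perm (Fin (n+1))) :
    TT n F σ = (((n : ℝ) + 1))⁻¹
      * ∑ l : Fin (n+1), F (Equiv.swap l (Fin.last n) * σ) := rfl

section Pointwise

variable {m : ℕ}

local notation "LL" => Fin.last m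
local notation "NR" => ((m : ℝ) + 1)

lemma NR_pos : (0:ℝ) < NR := by positivity

lemma swap_target_last {l y : Fin (m+1)} (h : Equiv.swap l LL y = LL) : l = y := by
  have h2 := congrArg (Equiv.swap l LL) h
  rw [Equiv.swap_apply_self, Equiv.swap_apply_right] at h2
  exact h2.symm

lemma swap_target_ne {l i y : Fin (m+1)} (hiL : i ≠ LL) (hyi : y ≠ i) (hyL : y ≠ LL)
    (h : Equiv.swap l LL y = i) : False := by
  have h2 := congrArg (Equiv.swap l LL) h
  rw [Equiv.swap_apply_self] at h2
  by_cases hil : i = l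
  · subst hil
    rw [Equiv.swap_apply_left] at h2
    exact hyL h2
  · rw [Equiv.swap_apply_of_ne_of_ne (Ne.symm (fun a => hil a.symm)) hiL] at h2
    exact hyi h2

lemma card_fin_real : ((Fintype.card (Fin (m+1)) : ℝ)) = NR := by
  rw [Fintype.card_fin]; push_cast; ring

lemma TT_ind_sum (P : Equiv.Perm (Fin (m+1)) → Prop) (σ : Equiv.Perm (Fin (m+1))) :
    TT m (fun τ => ind (P τ)) σ
      = (NR)⁻¹ * ∑ l : Fin (m+1), ind (P (Equiv.swap l LL * σ)) := rfl

lemma TT_nonneg {F : Equiv.Perm (Fin (m+1)) → ℝ} (h : ∀ τ, 0 ≤ F τ)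
    (σ : Equiv.Perm (Fin (m+1))) : 0 ≤ TT m F σ := by
  rw [TT_apply]
  apply mul_nonneg (by positivity)
  exact Finset.sum_nonneg fun l _ => h _

/-- (iii): top-type indicators contract to 1/N -/
lemma Tb_le (i : Fin (m+1)) (σ : Equiv.Perm (Fin (m+1))) :
    TT m (fun τ => ind (τ i = LL)) σ ≤ (NR)⁻¹ := by
  rw [TT_ind_sum (fun τ => τ i = LL)]
  have hb : ∑ l : Fin (m+1), ind ((Equiv.swap l LL * σ) i = LL) ≤ 1 := by
    apply sum_ind_le_one (σ i)
    intro l h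
    rw [Equiv.Perm.mul_apply] at h
    exact swap_target_last h
  calc (NR)⁻¹ * ∑ l : Fin (m+1), ind ((Equiv.swap l LL * σ) i = LL)
      ≤ (NR)⁻¹ * 1 := by
        apply mul_le_mul_of_nonneg_left hb (by positivity)
    _ = (NR)⁻¹ := mul_one _

/-- (i): lower drift bound for fixed-point indicator -/
lemma Ta_ge {i : Fin (m+1)} (hi : i ≠ LL) (σ : Equiv.Perm (Fin (m+1))) :
    (1 - (NR)⁻¹) * ind (σ i = i) ≤ TT m (fun τ => ind (τ i = i)) σ := by
  rw [TT_ind_sum (fun τ => τ i = i)]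
  by_cases h : σ i = i
  · rw [ind_true h]
    have hb : NR - 1 ≤ ∑ l : Fin (m+1), ind ((Equiv.swap l LL * σ) i = i) := by
      have := sum_ind_ge_card_sub_one (P := fun l => (Equiv.swap l LL * σ) i = i) i ?_
      · rw [card_fin_real] at this; exact this
      · intro l hl
        rw [Equiv.Perm.mul_apply, h]
        exact Equiv.swap_apply_of_ne_of_ne (Ne.symm hl) hi
    have hN : (0:ℝ) < NR := NR_pos
    calc (1 - (NR)⁻¹) * 1 = (NR)⁻¹ * (NR - 1) := by field_simp
      _ ≤ (NR)⁻¹ * ∑ l : Fin (m+1), ind ((Equiv.swap l LL * σ) i = i) := by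
          apply mul_le_mul_of_nonneg_left hb (by positivity)
  · rw [ind_false h, mul_zero]
    apply mul_nonneg (by positivity)
    exact Finset.sum_nonneg fun l _ => ind_nonneg _

/-- (ii): upper drift bound for fixed-point indicator -/
lemma Ta_le {i : Fin (m+1)} (hi : i ≠ LL) (σ : Equiv.Perm (Fin (m+1))) :
    TT m (fun τ => ind (τ i = i)) σ
      ≤ (1 - (NR)⁻¹) * ind (σ i = i) + (NR)⁻¹ * ind (σ i = LL) := by
  rw [TT_ind_sum (fun τ => τ i = i)]
  have hN : (0:ℝ) < NR := NR_pos
  by_cases h : σ i = i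
  · have hb : ∑ l : Fin (m+1), ind ((Equiv.swap l LL * σ) i = i) ≤ NR - 1 := by
      have := sum_ind_le_card_sub_one (P := fun l => (Equiv.swap l LL * σ) i = i) i ?_
      · rw [card_fin_real] at this; exact this
      · show ¬ (Equiv.swap i LL * σ) i = i
        rw [Equiv.Perm.mul_apply, h, Equiv.swap_apply_left]
        exact Ne.symm hi
    rw [ind_true h, ind_false (fun hL => hi (h ▸ hL))]
    calc (NR)⁻¹ * ∑ l : Fin (m+1), ind ((Equiv.swap l LL * σ) i = i)
        ≤ (NR)⁻¹ * (NR - 1) := mul_le_mul_of_nonneg_left hb (by positivity)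
      _ = (1 - (NR)⁻¹) * 1 + (NR)⁻¹ * 0 := by field_simp; ring
  · by_cases h2 : σ i = LL
    · have hb : ∑ l : Fin (m+1), ind ((Equiv.swap l LL * σ) i = i) ≤ 1 := by
        apply sum_ind_le_one i
        intro l hl
        rw [Equiv.Perm.mul_apply, h2, Equiv.swap_apply_right] at hl
        exact hl
      rw [ind_false h, ind_true h2]
      calc (NR)⁻¹ * ∑ l : Fin (m+1), ind ((Equiv.swap l LL * σ) i = i)
          ≤ (NR)⁻¹ * 1 := mul_le_mul_of_nonneg_left hb (by positivity)
        _ = (1 - (NR)⁻¹) * 0 + (NR)⁻¹ * 1 := by ring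
    · have hb : ∑ l : Fin (m+1), ind ((Equiv.swap l LL * σ) i = i) = 0 := by
        apply sum_ind_eq_zero
        intro l hl
        rw [Equiv.Perm.mul_apply] at hl
        exact swap_target_ne hi h h2 hl
      rw [ind_false h, ind_false h2, hb]
      norm_num

/-- (iv): pair fixed-point drift bound -/
lemma Tu_le {i j : Fin (m+1)} (hij : i ≠ j) (hi : i ≠ LL) (hj : j ≠ LL)
    (σ : Equiv.Perm (Fin (m+1))) :
    TT m (fun τ => ind (τ i = i ∧ τ j = j)) σ
      ≤ (1 - 2 * (NR)⁻¹) * ind (σ i = i ∧ σ j = j)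
        + (NR)⁻¹ * (ind (σ i = i ∧ σ j = LL) + ind (σ j = j ∧ σ i = LL)) := by
  rw [TT_ind_sum (fun τ => τ i = i ∧ τ j = j)]
  have hN : (0:ℝ) < NR := NR_pos
  have hsum_nonneg : (0:ℝ) ≤ ∑ l : Fin (m+1),
      ind ((Equiv.swap l LL * σ) i = i ∧ (Equiv.swap l LL * σ) j = j) :=
    Finset.sum_nonneg fun l _ => ind_nonneg _
  by_cases h1 : σ i = i
  · by_cases h2 : σ j = j
    · have hb : ∑ l : Fin (m+1),
          ind ((Equiv.swap l LL * σ) i = i ∧ (Equiv.swap l LL * σ) j = j) ≤ NR - 2 := by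
        have := sum_ind_le_card_sub_two
          (P := fun l => (Equiv.swap l LL * σ) i = i ∧ (Equiv.swap l LL * σ) j = j)
          i j hij ?_ ?_
        · rw [card_fin_real] at this; exact this
        · show ¬ ((Equiv.swap i LL * σ) i = i ∧ (Equiv.swap i LL * σ) j = j)
          rintro ⟨hc, -⟩
          rw [Equiv.Perm.mul_apply, h1, Equiv.swap_apply_left] at hc
          exact hi hc.symm
        · show ¬ ((Equiv.swap j LL * σ) i = i ∧ (Equiv.swap j LL * σ) j = j)
          rintro ⟨-, hc⟩
          rw [Equiv.Perm.mul_apply, h2, Equiv.swap_apply_left] at hc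
          exact hj hc.symm
      rw [ind_true ⟨h1, h2⟩, ind_false (fun hc => hj (h2 ▸ hc.2)),
        ind_false (fun hc => hi (h1 ▸ hc.2))]
      calc (NR)⁻¹ * ∑ l : Fin (m+1),
            ind ((Equiv.swap l LL * σ) i = i ∧ (Equiv.swap l LL * σ) j = j)
          ≤ (NR)⁻¹ * (NR - 2) := mul_le_mul_of_nonneg_left hb (by positivity)
        _ = (1 - 2 * (NR)⁻¹) * 1 + (NR)⁻¹ * (0 + 0) := by field_simp; ring
    · by_cases h3 : σ j = LL
      · have hb : ∑ l : Fin (m+1),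
            ind ((Equiv.swap l LL * σ) i = i ∧ (Equiv.swap l LL * σ) j = j) ≤ 1 := by
          apply sum_ind_le_one j
          rintro l ⟨-, hc⟩
          rw [Equiv.Perm.mul_apply, h3, Equiv.swap_apply_right] at hc
          exact hc
        rw [ind_false (fun hc => h2 hc.2), ind_true ⟨h1, h3⟩,
          ind_false (fun hc => h2 hc.1)]
        calc (NR)⁻¹ * ∑ l : Fin (m+1),
              ind ((Equiv.swap l LL * σ) i = i ∧ (Equiv.swap l LL * σ) j = j)
            ≤ (NR)⁻¹ * 1 := mul_le_mul_of_nonneg_left hb (by positivity)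
          _ = (1 - 2 * (NR)⁻¹) * 0 + (NR)⁻¹ * (1 + 0) := by ring
      · have hb : ∑ l : Fin (m+1),
            ind ((Equiv.swap l LL * σ) i = i ∧ (Equiv.swap l LL * σ) j = j) = 0 := by
          apply sum_ind_eq_zero
          rintro l ⟨-, hc⟩
          rw [Equiv.Perm.mul_apply] at hc
          exact swap_target_ne hj h2 h3 hc
        rw [ind_false (fun hc => h2 hc.2), ind_false (fun hc => h3 hc.2),
          ind_false (fun hc => h2 hc.1), hb]
        norm_num
  · by_cases h3 : σ i = LL
    · by_cases h2 : σ j = j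
      · have hb : ∑ l : Fin (m+1),
            ind ((Equiv.swap l LL * σ) i = i ∧ (Equiv.swap l LL * σ) j = j) ≤ 1 := by
          apply sum_ind_le_one i
          rintro l ⟨hc, -⟩
          rw [Equiv.Perm.mul_apply, h3, Equiv.swap_apply_right] at hc
          exact hc
        rw [ind_false (fun hc => h1 hc.1), ind_false (fun hc => h1 hc.1),
          ind_true ⟨h2, h3⟩]
        calc (NR)⁻¹ * ∑ l : Fin (m+1),
              ind ((Equiv.swap l LL * σ) i = i ∧ (Equiv.swap l LL * σ) j = j)
            ≤ (NR)⁻¹ * 1 := mul_le_mul_of_nonneg_left hb (by positivity)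
          _ = (1 - 2 * (NR)⁻¹) * 0 + (NR)⁻¹ * (0 + 1) := by ring
      · have hb : ∑ l : Fin (m+1),
            ind ((Equiv.swap l LL * σ) i = i ∧ (Equiv.swap l LL * σ) j = j) = 0 := by
          apply sum_ind_eq_zero
          rintro l ⟨-, hc⟩
          rw [Equiv.Perm.mul_apply] at hc
          by_cases h4 : σ j = LL
          · exact hij (σ.injective (h3.trans h4.symm))
          · exact swap_target_ne hj h2 h4 hc
        rw [ind_false (fun hc => h1 hc.1), ind_false (fun hc => h1 hc.1),
          ind_false (fun hc => h2 hc.1), hb]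
        norm_num
    · have hb : ∑ l : Fin (m+1),
          ind ((Equiv.swap l LL * σ) i = i ∧ (Equiv.swap l LL * σ) j = j) = 0 := by
        apply sum_ind_eq_zero
        rintro l ⟨hc, -⟩
        rw [Equiv.Perm.mul_apply] at hc
        exact swap_target_ne hi h1 h3 hc
      rw [ind_false (fun hc => h1 hc.1), ind_false (fun hc => h1 hc.1),
        ind_false (fun hc => h3 hc.2), hb]
      norm_num

/-- (v): v-type drift bound -/
lemma Tv_le {i j : Fin (m+1)} (hij : i ≠ j) (hi : i ≠ LL)
    (σ : Equiv.Perm (Fin (m+1))) :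
    TT m (fun τ => ind (τ i = i ∧ τ j = LL)) σ
      ≤ (NR)⁻¹ * (ind (σ i = i) + ind (σ i = LL ∧ σ j = i)) := by
  rw [TT_ind_sum (fun τ => τ i = i ∧ τ j = LL)]
  have hb : ∑ l : Fin (m+1),
      ind ((Equiv.swap l LL * σ) i = i ∧ (Equiv.swap l LL * σ) j = LL)
        ≤ ind (σ i = i) + ind (σ i = LL ∧ σ j = i) := by
    refine le_trans (sum_ind_le_prop
      (Q := Equiv.swap (σ j) LL (σ i) = i) (σ j) ?_ ?_) (ind_or_le ?_)
    · rintro l ⟨-, hc⟩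
      rw [Equiv.Perm.mul_apply] at hc
      exact swap_target_last hc
    · rintro ⟨hc, -⟩
      rw [Equiv.Perm.mul_apply] at hc
      exact hc
    · intro hA
      by_cases h1 : σ i = i
      · exact Or.inl h1
      · by_cases h2 : σ i = LL
        · refine Or.inr ⟨h2, ?_⟩
          rw [h2, Equiv.swap_apply_right] at hA
          exact hA
        · exfalso
          have hne : σ i ≠ σ j := fun hc => hij (σ.injective hc)
          rw [Equiv.swap_apply_of_ne_of_ne hne h2] at hA
          exact h1 hA
  calc (NR)⁻¹ * ∑ l : Fin (m+1),
        ind ((Equiv.swap l LL * σ) i = i ∧ (Equiv.swap l LL * σ) j = LL)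
      ≤ (NR)⁻¹ * (ind (σ i = i) + ind (σ i = LL ∧ σ j = i)) :=
        mul_le_mul_of_nonneg_left hb (by positivity)

/-- (vi): s-type drift bound -/
lemma Ts_le {i j : Fin (m+1)} (hij : i ≠ j)
    (σ : Equiv.Perm (Fin (m+1))) :
    TT m (fun τ => ind (τ i = LL ∧ τ j = i)) σ
      ≤ (NR)⁻¹ * (ind (σ j = i) + ind (σ i = i ∧ σ j = LL)) := by
  rw [TT_ind_sum (fun τ => τ i = LL ∧ τ j = i)]
  have hb : ∑ l : Fin (m+1),
      ind ((Equiv.swap l LL * σ) i = LL ∧ (Equiv.swap l LL * σ) j = i)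
        ≤ ind (σ j = i) + ind (σ i = i ∧ σ j = LL) := by
    refine le_trans (sum_ind_le_prop
      (Q := Equiv.swap (σ i) LL (σ j) = i) (σ i) ?_ ?_) (ind_or_le ?_)
    · rintro l ⟨hc, -⟩
      rw [Equiv.Perm.mul_apply] at hc
      exact swap_target_last hc
    · rintro ⟨-, hc⟩
      rw [Equiv.Perm.mul_apply] at hc
      exact hc
    · intro hA
      by_cases h1 : σ j = i
      · exact Or.inl h1
      · by_cases h2 : σ j = LL
        · refine Or.inr ⟨?_, h2⟩
          rw [h2, Equiv.swap_apply_right] at hA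
          exact hA
        · exfalso
          have hne : σ j ≠ σ i := fun hc => hij (σ.injective hc.symm)
          rw [Equiv.swap_apply_of_ne_of_ne hne h2] at hA
          exact h1 hA
  calc (NR)⁻¹ * ∑ l : Fin (m+1),
        ind ((Equiv.swap l LL * σ) i = LL ∧ (Equiv.swap l LL * σ) j = i)
      ≤ (NR)⁻¹ * (ind (σ j = i) + ind (σ i = i ∧ σ j = LL)) :=
        mul_le_mul_of_nonneg_left hb (by positivity)

/-- (vii): c-type drift bound -/
lemma Tc_le {i j : Fin (m+1)} (hi : i ≠ LL)
    (σ : Equiv.Perm (Fin (m+1))) :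
    TT m (fun τ => ind (τ j = i)) σ
      ≤ (1 - (NR)⁻¹) * ind (σ j = i) + (NR)⁻¹ * ind (σ j = LL) := by
  rw [TT_ind_sum (fun τ => τ j = i)]
  have hN : (0:ℝ) < NR := NR_pos
  by_cases h : σ j = i
  · have hb : ∑ l : Fin (m+1), ind ((Equiv.swap l LL * σ) j = i) ≤ NR - 1 := by
      have := sum_ind_le_card_sub_one (P := fun l => (Equiv.swap l LL * σ) j = i) i ?_
      · rw [card_fin_real] at this; exact this
      · show ¬ (Equiv.swap i LL * σ) j = i
        rw [Equiv.Perm.mul_apply, h, Equiv.swap_apply_left]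
        exact Ne.symm hi
    rw [ind_true h, ind_false (fun hL => hi (h ▸ hL))]
    calc (NR)⁻¹ * ∑ l : Fin (m+1), ind ((Equiv.swap l LL * σ) j = i)
        ≤ (NR)⁻¹ * (NR - 1) := mul_le_mul_of_nonneg_left hb (by positivity)
      _ = (1 - (NR)⁻¹) * 1 + (NR)⁻¹ * 0 := by field_simp; ring
  · by_cases h2 : σ j = LL
    · have hb : ∑ l : Fin (m+1), ind ((Equiv.swap l LL * σ) j = i) ≤ 1 := by
        apply sum_ind_le_one i
        intro l hl
        rw [Equiv.Perm.mul_apply, h2, Equiv.swap_apply_right] at hl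
        exact hl
      rw [ind_false h, ind_true h2]
      calc (NR)⁻¹ * ∑ l : Fin (m+1), ind ((Equiv.swap l LL * σ) j = i)
          ≤ (NR)⁻¹ * 1 := mul_le_mul_of_nonneg_left hb (by positivity)
        _ = (1 - (NR)⁻¹) * 0 + (NR)⁻¹ * 1 := by ring
    · have hb : ∑ l : Fin (m+1), ind ((Equiv.swap l LL * σ) j = i) = 0 := by
        apply sum_ind_eq_zero
        intro l hl
        rw [Equiv.Perm.mul_apply] at hl
        exact swap_target_ne hi h h2 hl
      rw [ind_false h, ind_false h2, hb]
      norm_num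

end Pointwise

/-- The comparison sequence `A 0 = 1`, `A (k+1) = (1 - 1/N) A k + 1/N²`. -/
def Aseq (n : ℕ) : ℕ → ℝ
  | 0 => 1
  | k+1 => (1 - (((n:ℝ)+1))⁻¹) * Aseq n k + ((((n:ℝ)+1))⁻¹) ^ 2

section Seq

variable (n : ℕ)

local notation "NV" => ((((n:ℝ)+1))⁻¹)
local notation "LS" => Fin.last n

lemma NV_pos : (0:ℝ) < NV := by positivity

lemma NV_le_one : NV ≤ 1 := by
  rw [inv_le_one_iff₀]
  right
  have : (0:ℝ) ≤ (n:ℝ) := Nat.cast_nonneg n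
  linarith

lemma theta_nonneg : (0:ℝ) ≤ 1 - NV := by
  have := NV_le_one n; linarith

lemma Aseq_ge (k : ℕ) : NV ≤ Aseq n k := by
  induction k with
  | zero => exact NV_le_one n
  | succ k ih =>
      show NV ≤ (1 - NV) * Aseq n k + NV ^ 2
      have h1 : (1 - NV) * NV ≤ (1 - NV) * Aseq n k :=
        mul_le_mul_of_nonneg_left ih (theta_nonneg n)
      nlinarith [NV_pos n]

lemma Aseq_nonneg (k : ℕ) : 0 ≤ Aseq n k := le_trans (le_of_lt (NV_pos n)) (Aseq_ge n k)

lemma Aseq_le_one (k : ℕ) : Aseq n k ≤ 1 := by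
  induction k with
  | zero => exact le_refl 1
  | succ k ih =>
      show (1 - NV) * Aseq n k + NV ^ 2 ≤ 1
      have h1 : (1 - NV) * Aseq n k ≤ (1 - NV) * 1 :=
        mul_le_mul_of_nonneg_left ih (theta_nonneg n)
      have h2 : NV ^ 2 ≤ NV := by
        nlinarith [NV_pos n, NV_le_one n]
      linarith

lemma Aseq_ub (k : ℕ) : Aseq n k ≤ (1 - NV) ^ k + NV := by
  induction k with
  | zero =>
      show (1:ℝ) ≤ (1 - NV) ^ 0 + NV
      rw [pow_zero]
      have := NV_pos n; linarith
  | succ k ih =>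
      show (1 - NV) * Aseq n k + NV ^ 2 ≤ (1 - NV) ^ (k+1) + NV
      have h1 : (1 - NV) * Aseq n k ≤ (1 - NV) * ((1 - NV) ^ k + NV) :=
        mul_le_mul_of_nonneg_left ih (theta_nonneg n)
      have : (1 - NV) * ((1 - NV) ^ k + NV) + NV ^ 2 = (1 - NV) ^ (k+1) + NV := by
        rw [pow_succ]
        ring
      linarith

lemma Aseq_prev (hn : 1 ≤ n) (k : ℕ) : Aseq n k ≤ (1 + 2 * NV) * Aseq n (k+1) := by
  have hA : Aseq n (k+1) = (1 - NV) * Aseq n k + NV ^ 2 := rfl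
  have h2 : NV ≤ (1:ℝ)/2 := by
    rw [inv_le_iff_one_le_mul₀ (by positivity)]
    have : (1:ℝ) ≤ (n:ℝ) := by exact_mod_cast hn
    linarith
  have h3 : 0 ≤ NV - 2 * NV ^ 2 := by nlinarith [NV_pos n]
  have h4 : 0 ≤ (NV - 2 * NV ^ 2) * Aseq n k := mul_nonneg h3 (Aseq_nonneg n k)
  rw [hA]
  nlinarith [NV_pos n]

variable (G : Type*) [Group G] [Fintype G]

lemma hEb {i : Fin (n+1)} (hi : i ≠ LS) (k : ℕ) :
    EE n G (fun σ => ind (σ i = LS)) k ≤ NV := by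
  cases k with
  | zero =>
      rw [EE_zero]
      have : ind ((1 : Equiv.Perm (Fin (n+1))) i = LS) = 0 := ind_false (by simpa using hi)
      rw [this]
      exact le_of_lt (NV_pos n)
  | succ k =>
      rw [EE_step']
      calc EE n G (TT n fun σ => ind (σ i = LS)) k
          ≤ EE n G (fun _ => NV) k := EE_mono (fun σ => Tb_le i σ) k
        _ = NV := EE_const _ k

lemma hEbtop (k : ℕ) :
    EE n G (fun σ => ind (σ LS = LS)) (k+1) ≤ NV := by
  rw [EE_step']
  calc EE n G (TT n fun σ => ind (σ LS = LS)) k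
      ≤ EE n G (fun _ => NV) k := EE_mono (fun σ => Tb_le LS σ) k
    _ = NV := EE_const _ k

lemma hEa_lb {i : Fin (n+1)} (hi : i ≠ LS) (k : ℕ) :
    (1 - NV) ^ k ≤ EE n G (fun σ => ind (σ i = i)) k := by
  induction k with
  | zero =>
      rw [EE_zero, pow_zero]
      exact le_of_eq (ind_true (by simp)).symm
  | succ k ih =>
      rw [EE_step', pow_succ, mul_comm ((1-NV)^k) (1-NV)]
      calc (1 - NV) * (1 - NV) ^ k
          ≤ (1 - NV) * EE n G (fun σ => ind (σ i = i)) k :=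
            mul_le_mul_of_nonneg_left ih (theta_nonneg n)
        _ = EE n G (fun σ => (1 - NV) * ind (σ i = i)) k := (EE_smul _ _ k).symm
        _ ≤ EE n G (TT n fun σ => ind (σ i = i)) k := EE_mono (fun σ => Ta_ge hi σ) k

lemma hEa_ub {i : Fin (n+1)} (hi : i ≠ LS) (k : ℕ) :
    EE n G (fun σ => ind (σ i = i)) k ≤ Aseq n k := by
  induction k with
  | zero =>
      rw [EE_zero]
      exact le_of_eq (ind_true (by simp))
  | succ k ih =>
      rw [EE_step']
      calc EE n G (TT n fun σ => ind (σ i = i)) k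
          ≤ EE n G (fun σ => (1 - NV) * ind (σ i = i) + NV * ind (σ i = LS)) k :=
            EE_mono (fun σ => Ta_le hi σ) k
        _ = (1 - NV) * EE n G (fun σ => ind (σ i = i)) k
              + NV * EE n G (fun σ => ind (σ i = LS)) k := by
            rw [EE_add]
            rw [EE_smul, EE_smul]
        _ ≤ (1 - NV) * Aseq n k + NV * NV := by
            have h1 := mul_le_mul_of_nonneg_left ih (theta_nonneg n)
            have h2 := mul_le_mul_of_nonneg_left (hEb n G hi k) (le_of_lt (NV_pos n))
            linarith
        _ = Aseq n (k+1) := by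
            show _ = (1 - NV) * Aseq n k + NV ^ 2
            ring

lemma hEc {i j : Fin (n+1)} (hij : i ≠ j) (hi : i ≠ LS) (hj : j ≠ LS) (k : ℕ) :
    EE n G (fun σ => ind (σ j = i)) k ≤ NV := by
  induction k with
  | zero =>
      rw [EE_zero]
      have : ind ((1 : Equiv.Perm (Fin (n+1))) j = i) = 0 :=
        ind_false (by simpa using fun h => hij h.symm)
      rw [this]
      exact le_of_lt (NV_pos n)
  | succ k ih =>
      rw [EE_step']
      calc EE n G (TT n fun σ => ind (σ j = i)) k
          ≤ EE n G (fun σ => (1 - NV) * ind (σ j = i) + NV * ind (σ j = LS)) k :=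
            EE_mono (fun σ => Tc_le hi σ) k
        _ = (1 - NV) * EE n G (fun σ => ind (σ j = i)) k
              + NV * EE n G (fun σ => ind (σ j = LS)) k := by
            rw [EE_add, EE_smul, EE_smul]
        _ ≤ (1 - NV) * NV + NV * NV := by
            have h1 := mul_le_mul_of_nonneg_left ih (theta_nonneg n)
            have h2 := mul_le_mul_of_nonneg_left (hEb n G hj k) (le_of_lt (NV_pos n))
            linarith
        _ = NV := by ring

lemma hEs {i j : Fin (n+1)} (hij : i ≠ j) (hi : i ≠ LS) (hj : j ≠ LS) (k : ℕ) :
    EE n G (fun σ => ind (σ i = LS ∧ σ j = i)) k ≤ 2 * NV := by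
  induction k with
  | zero =>
      rw [EE_zero]
      have : ind ((1 : Equiv.Perm (Fin (n+1))) i = LS
          ∧ (1 : Equiv.Perm (Fin (n+1))) j = i) = 0 :=
        ind_false (fun h => hi (by simpa using h.1))
      rw [this]
      have := NV_pos n; linarith
  | succ k ih =>
      rw [EE_step']
      calc EE n G (TT n fun σ => ind (σ i = LS ∧ σ j = i)) k
          ≤ EE n G (fun σ => NV * (ind (σ j = i) + ind (σ i = i ∧ σ j = LS))) k :=
            EE_mono (fun σ => Ts_le hij σ) k
        _ = NV * (EE n G (fun σ => ind (σ j = i)) k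
              + EE n G (fun σ => ind (σ i = i ∧ σ j = LS)) k) := by
            rw [show (fun σ : Equiv.Perm (Fin (n+1)) =>
              NV * (ind (σ j = i) + ind (σ i = i ∧ σ j = LS)))
              = fun σ => NV * (ind (σ j = i) + ind (σ i = i ∧ σ j = LS)) from rfl]
            rw [EE_smul NV (fun σ => ind (σ j = i) + ind (σ i = i ∧ σ j = LS)) k]
            rw [EE_add]
        _ ≤ NV * (NV + 1) := by
            have h1 := hEc n G hij hi hj k
            have h2 : EE n G (fun σ => ind (σ i = i ∧ σ j = LS)) k ≤ 1 := by
              calc EE n G (fun σ => ind (σ i = i ∧ σ j = LS)) k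
                  ≤ EE n G (fun _ => (1:ℝ)) k := EE_mono (fun σ => ind_le_one _) k
                _ = 1 := EE_const _ k
            have := NV_pos n
            nlinarith
        _ ≤ 2 * NV := by
            have h1 := NV_le_one n
            have h2 := NV_pos n
            nlinarith

lemma hEv {i j : Fin (n+1)} (hij : i ≠ j) (hi : i ≠ LS) (hj : j ≠ LS) (k : ℕ) :
    EE n G (fun σ => ind (σ i = i ∧ σ j = LS)) (k+1) ≤ NV * (Aseq n k + 2 * NV) := by
  rw [EE_step']
  calc EE n G (TT n fun σ => ind (σ i = i ∧ σ j = LS)) k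
      ≤ EE n G (fun σ => NV * (ind (σ i = i) + ind (σ i = LS ∧ σ j = i))) k :=
        EE_mono (fun σ => Tv_le hij hi σ) k
    _ = NV * (EE n G (fun σ => ind (σ i = i)) k
          + EE n G (fun σ => ind (σ i = LS ∧ σ j = i)) k) := by
        rw [EE_smul NV (fun σ => ind (σ i = i) + ind (σ i = LS ∧ σ j = i)) k]
        rw [EE_add]
    _ ≤ NV * (Aseq n k + 2 * NV) := by
        have h1 := hEa_ub n G hi k
        have h2 := hEs n G hij hi hj k
        have := NV_pos n
        nlinarith

lemma hEv0 {i j : Fin (n+1)} (hj : j ≠ LS) :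
    EE n G (fun σ => ind (σ i = i ∧ σ j = LS)) 0 = 0 := by
  rw [EE_zero]
  exact ind_false (fun h => hj (by simpa using h.2))

lemma keyineq {u x a : ℝ} (hu : 0 < u) (hu4 : u ≤ 1/4) (hx_lo : u ≤ x) (hx_hi : x ≤ 1)
    (ha : 0 ≤ a) (hax : a ≤ (1 + 2*u) * x) :
    (1 - 2*u) * (x^2 + 10*x*u) + u * (u*(a + 2*u) + u*(a + 2*u))
      ≤ ((1-u)*x + u^2)^2 + 10*((1-u)*x + u^2)*u := by
  nlinarith [mul_nonneg (le_of_lt hu) (le_of_lt hu),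
    mul_nonneg (mul_nonneg (le_of_lt hu) (le_of_lt hu)) (le_of_lt hu),
    sq_nonneg (x - u), mul_nonneg (le_of_lt hu) (le_trans (le_of_lt hu) hx_lo),
    mul_le_mul_of_nonneg_left hax (le_of_lt (mul_pos hu hu)),
    mul_le_mul_of_nonneg_left hx_lo (le_of_lt (mul_pos hu hu)),
    mul_le_mul_of_nonneg_left hx_hi (le_of_lt (mul_pos hu hu)),
    mul_le_mul_of_nonneg_left hx_hi (le_of_lt (mul_pos (mul_pos hu hu) hu)),
    sq_nonneg (u*x), sq_nonneg u, sq_nonneg x]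

lemma hEu (hn4 : 3 ≤ n) {i j : Fin (n+1)} (hij : i ≠ j) (hi : i ≠ LS) (hj : j ≠ LS)
    (k : ℕ) :
    EE n G (fun σ => ind (σ i = i ∧ σ j = j)) k
      ≤ Aseq n k ^ 2 + 10 * Aseq n k * NV := by
  have hu : (0:ℝ) < NV := NV_pos n
  have hu4 : NV ≤ 1/4 := by
    rw [inv_le_iff_one_le_mul₀ (by positivity)]
    have : (3:ℝ) ≤ (n:ℝ) := by exact_mod_cast hn4
    linarith
  have hstep : ∀ k : ℕ, EE n G (fun σ => ind (σ i = i ∧ σ j = j)) (k+1)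
      ≤ (1 - 2*NV) * EE n G (fun σ => ind (σ i = i ∧ σ j = j)) k
        + NV * (EE n G (fun σ => ind (σ i = i ∧ σ j = LS)) k
          + EE n G (fun σ => ind (σ j = j ∧ σ i = LS)) k) := by
    intro k
    rw [EE_step']
    calc EE n G (TT n fun σ => ind (σ i = i ∧ σ j = j)) k
        ≤ EE n G (fun σ => (1 - 2 * NV) * ind (σ i = i ∧ σ j = j)
            + NV * (ind (σ i = i ∧ σ j = LS) + ind (σ j = j ∧ σ i = LS))) k :=
          EE_mono (fun σ => Tu_le hij hi hj σ) k
      _ = (1 - 2*NV) * EE n G (fun σ => ind (σ i = i ∧ σ j = j)) k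
            + NV * (EE n G (fun σ => ind (σ i = i ∧ σ j = LS)) k
              + EE n G (fun σ => ind (σ j = j ∧ σ i = LS)) k) := by
          rw [EE_add, EE_smul,
            EE_smul NV (fun σ => ind (σ i = i ∧ σ j = LS) + ind (σ j = j ∧ σ i = LS)) k,
            EE_add]
  induction k with
  | zero =>
      rw [EE_zero]
      have h1 : ind ((1 : Equiv.Perm (Fin (n+1))) i = i
          ∧ (1 : Equiv.Perm (Fin (n+1))) j = j) = 1 := ind_true (by simp)
      rw [h1]
      show (1:ℝ) ≤ (1:ℝ)^2 + 10 * 1 * NV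
      nlinarith
  | succ k ih =>
      cases k with
      | zero =>
          have h0 : EE n G (fun σ => ind (σ i = i ∧ σ j = j)) 0 = 1 := by
            rw [EE_zero]
            exact ind_true (by simp)
          have hb := hstep 0
          rw [h0, hEv0 n G hj, hEv0 n G (i := j) (j := i) hi] at hb
          have hA1 : Aseq n 1 = (1 - NV) * 1 + NV ^ 2 := rfl
          have hA1ge : 1 - NV ≤ Aseq n 1 := by rw [hA1]; nlinarith
          have hA1pos : 0 ≤ Aseq n 1 := Aseq_nonneg n 1
          calc EE n G (fun σ => ind (σ i = i ∧ σ j = j)) 1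
              ≤ (1 - 2*NV) * 1 + NV * (0 + 0) := hb
            _ ≤ Aseq n 1 ^ 2 + 10 * Aseq n 1 * NV := by nlinarith
      | succ l =>
          have hb := hstep (l+1)
          have hv1 := hEv n G hij hi hj l
          have hv2 := hEv n G (i := j) (j := i) hij.symm hj hi l
          have hAprev := Aseq_prev n (by omega) l
          have hA2 : Aseq n (l+1+1) = (1 - NV) * Aseq n (l+1) + NV ^ 2 := rfl
          have hxlo := Aseq_ge n (l+1)
          have hxhi := Aseq_le_one n (l+1)
          have ha0 := Aseq_nonneg n l
          have key := keyineq hu hu4 hxlo hxhi ha0 hAprev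
          have h2NV : (0:ℝ) ≤ 1 - 2*NV := by linarith
          have m1 := mul_le_mul_of_nonneg_left ih h2NV
          have m2 := mul_le_mul_of_nonneg_left (add_le_add hv1 hv2) (le_of_lt hu)
          calc EE n G (fun σ => ind (σ i = i ∧ σ j = j)) (l+1+1)
              ≤ (1 - 2*NV) * (Aseq n (l+1) ^ 2 + 10 * Aseq n (l+1) * NV)
                + NV * (NV * (Aseq n l + 2 * NV) + NV * (Aseq n l + 2 * NV)) := by
                  have : 10 * Aseq n (l+1) * NV = Aseq n (l+1) * NV * 10 := by ring
                  nlinarith [hb, m1, m2]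
            _ ≤ ((1 - NV) * Aseq n (l+1) + NV ^ 2) ^ 2
                + 10 * ((1 - NV) * Aseq n (l+1) + NV ^ 2) * NV := by
                  have heq1 : (1 - 2*NV) * (Aseq n (l+1) ^ 2 + 10 * Aseq n (l+1) * NV)
                      = (1 - 2*NV) * (Aseq n (l+1) ^ 2 + 10 * Aseq n (l+1) * NV) := rfl
                  nlinarith [key]
            _ = Aseq n (l+1+1) ^ 2 + 10 * Aseq n (l+1+1) * NV := by rw [hA2]

end Seq

lemma sum_ind_eq_one'' {α : Type*} [Fintype α] (l₀ : α) :
    ∑ l : α, ind (l₀ = l) = 1 := by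
  have : ∀ l : α, ind (l₀ = l) = ind (l = l₀) := by
    intro l
    unfold ind
    exact if_congr eq_comm rfl rfl
  rw [Finset.sum_congr rfl fun l _ => this l]
  exact sum_ind_eq_one l₀

/-- number of fixed points, as a real-valued function -/
def fixF (n : ℕ) : Equiv.Perm (Fin (n+1)) → ℝ := fun σ => ∑ i : Fin (n+1), ind (σ i = i)

section Moments

variable (n : ℕ) (G : Type*) [Group G] [Fintype G]

local notation "NV" => ((((n:ℝ)+1))⁻¹)
local notation "LS" => Fin.last n

lemma EE_nonneg {F : Equiv.Perm (Fin (n+1)) → ℝ} (h : ∀ σ, 0 ≤ F σ) (k : ℕ) :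
    0 ≤ EE n G F k :=
  Finset.sum_nonneg fun x _ => mul_nonneg (convPow_nonneg k x) (h _)

lemma sum_except (c : ℝ) :
    ∑ i : Fin (n+1), (if i = LS then (0:ℝ) else c) = (n:ℝ) * c := by
  have hpt : ∀ i : Fin (n+1), (if i = LS then (0:ℝ) else c)
      = c - (if i = LS then c else 0) := by
    intro i; split <;> ring
  rw [Finset.sum_congr rfl fun i _ => hpt i, Finset.sum_sub_distrib]
  rw [sum_delta (P := fun i : Fin (n+1) => i = LS) LS (fun _ => c) rfl (fun x h => h)]
  rw [Finset.sum_const, Finset.card_univ, Fintype.card_fin, nsmul_eq_mul]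
  push_cast
  ring

lemma EE_fix_lb (k : ℕ) : (n:ℝ) * (1 - NV) ^ k ≤ EE n G (fixF n) k := by
  rw [show fixF n = fun σ => ∑ i : Fin (n+1), ind (σ i = i) from rfl]
  rw [EE_sum (fun i => fun σ => ind (σ i = i)) k]
  have hpt : ∀ i : Fin (n+1), (if i = LS then (0:ℝ) else (1 - NV) ^ k)
      ≤ EE n G (fun σ => ind (σ i = i)) k := by
    intro i
    by_cases h : i = LS
    · rw [if_pos h]
      exact EE_nonneg n G (fun σ => ind_nonneg _) k
    · rw [if_neg h]
      exact hEa_lb n G h k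
  calc (n:ℝ) * (1 - NV) ^ k
      = ∑ i : Fin (n+1), (if i = LS then (0:ℝ) else (1 - NV) ^ k) :=
        (sum_except n _).symm
    _ ≤ ∑ i : Fin (n+1), EE n G (fun σ => ind (σ i = i)) k :=
        Finset.sum_le_sum fun i _ => hpt i

lemma EE_fix_ub (k : ℕ) : EE n G (fixF n) (k+1) ≤ ((n:ℝ)+1) * Aseq n (k+1) := by
  rw [show fixF n = fun σ => ∑ i : Fin (n+1), ind (σ i = i) from rfl]
  rw [EE_sum (fun i => fun σ => ind (σ i = i)) (k+1)]
  have hpt : ∀ i : Fin (n+1),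
      EE n G (fun σ => ind (σ i = i)) (k+1) ≤ Aseq n (k+1) := by
    intro i
    by_cases h : i = LS
    · subst h
      exact le_trans (hEbtop n G k) (Aseq_ge n (k+1))
    · exact hEa_ub n G h (k+1)
  calc ∑ i : Fin (n+1), EE n G (fun σ => ind (σ i = i)) (k+1)
      ≤ ∑ _i : Fin (n+1), Aseq n (k+1) := Finset.sum_le_sum fun i _ => hpt i
    _ = ((n:ℝ)+1) * Aseq n (k+1) := by
        rw [Finset.sum_const, Finset.card_univ, Fintype.card_fin, nsmul_eq_mul]
        push_cast
        ring

lemma EE_fixsq_ub (hn4 : 3 ≤ n) (k : ℕ) :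
    EE n G (fun σ => (fixF n σ) ^ 2) (k+1)
      ≤ ((n:ℝ)+1) ^ 2 * (Aseq n (k+1) ^ 2 + 10 * Aseq n (k+1) * NV)
        + 3 * ((n:ℝ)+1) * Aseq n (k+1) := by
  have hsq : ∀ σ : Equiv.Perm (Fin (n+1)), (fixF n σ) ^ 2
      = ∑ i : Fin (n+1), ∑ j : Fin (n+1), ind (σ i = i ∧ σ j = j) := by
    intro σ
    rw [sq]
    unfold fixF
    rw [Finset.sum_mul_sum]
    exact Finset.sum_congr rfl fun i _ => Finset.sum_congr rfl fun j _ =>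
      ind_mul_ind _ _
  rw [show (fun σ => (fixF n σ) ^ 2)
    = fun σ => ∑ i : Fin (n+1), ∑ j : Fin (n+1), ind (σ i = i ∧ σ j = j)
    from funext hsq]
  rw [EE_sum (fun i => fun σ => ∑ j : Fin (n+1), ind (σ i = i ∧ σ j = j)) (k+1)]
  rw [Finset.sum_congr rfl fun i _ =>
    EE_sum (fun j => fun σ => ind (σ i = i ∧ σ j = j)) (k+1)]
  set A := Aseq n (k+1) with hAdef
  have hA0 : 0 ≤ A := Aseq_nonneg n (k+1)
  have hAge : NV ≤ A := Aseq_ge n (k+1)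
  have hQ0 : 0 ≤ A ^ 2 + 10 * A * NV := by
    have := NV_pos n
    nlinarith
  have hterm : ∀ i j : Fin (n+1),
      EE n G (fun σ => ind (σ i = i ∧ σ j = j)) (k+1)
        ≤ (A ^ 2 + 10 * A * NV) + A * (ind (i = j) + ind (i = LS) + ind (j = LS)) := by
    intro i j
    by_cases hij : i = j
    · subst hij
      have heq : (fun σ : Equiv.Perm (Fin (n+1)) => ind (σ i = i ∧ σ i = i))
          = fun σ => ind (σ i = i) := by
        funext σ
        exact ind_congr and_self_iff
      rw [heq]
      have hle : EE n G (fun σ => ind (σ i = i)) (k+1) ≤ A := by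
        by_cases h : i = LS
        · subst h; exact le_trans (hEbtop n G k) hAge
        · exact hEa_ub n G h (k+1)
      have h1 : (1:ℝ) ≤ ind (i = i) + ind (i = LS) + ind (i = LS) := by
        rw [ind_true rfl]
        have := ind_nonneg (i = LS)
        linarith
      calc EE n G (fun σ => ind (σ i = i)) (k+1)
          ≤ A := hle
        _ = A * 1 := (mul_one A).symm
        _ ≤ A * (ind (i = i) + ind (i = LS) + ind (i = LS)) :=
            mul_le_mul_of_nonneg_left h1 hA0
        _ ≤ (A ^ 2 + 10 * A * NV) + A * (ind (i = i) + ind (i = LS) + ind (i = LS)) :=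
            le_add_of_nonneg_left hQ0
    · by_cases hiL : i = LS
      · subst hiL
        have hle : EE n G (fun σ => ind (σ LS = LS ∧ σ j = j)) (k+1) ≤ A := by
          refine le_trans (le_trans (EE_mono (fun σ => ind_le_ind And.left) (k+1)) ?_) hAge
          exact hEbtop n G k
        have h1 : (1:ℝ) ≤ ind (LS = j) + ind (LS = LS) + ind (j = LS) := by
          rw [ind_true rfl]
          have := ind_nonneg (LS = j); have := ind_nonneg (j = LS)
          linarith
        calc EE n G (fun σ => ind (σ LS = LS ∧ σ j = j)) (k+1)
            ≤ A := hle
          _ = A * 1 := (mul_one A).symm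
          _ ≤ A * (ind (LS = j) + ind (LS = LS) + ind (j = LS)) :=
              mul_le_mul_of_nonneg_left h1 hA0
          _ ≤ (A ^ 2 + 10 * A * NV)
                + A * (ind (LS = j) + ind (LS = LS) + ind (j = LS)) :=
              le_add_of_nonneg_left hQ0
      · by_cases hjL : j = LS
        · subst hjL
          have hle : EE n G (fun σ => ind (σ i = i ∧ σ LS = LS)) (k+1) ≤ A := by
            refine le_trans (le_trans (EE_mono (fun σ => ind_le_ind And.right) (k+1)) ?_) hAge
            exact hEbtop n G k
          have h1 : (1:ℝ) ≤ ind (i = LS) + ind (i = LS) + ind (LS = LS) := by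
            rw [ind_true rfl]
            have := ind_nonneg (i = LS)
            linarith
          calc EE n G (fun σ => ind (σ i = i ∧ σ LS = LS)) (k+1)
              ≤ A := hle
            _ = A * 1 := (mul_one A).symm
            _ ≤ A * (ind (i = LS) + ind (i = LS) + ind (LS = LS)) :=
                mul_le_mul_of_nonneg_left h1 hA0
            _ ≤ (A ^ 2 + 10 * A * NV)
                  + A * (ind (i = LS) + ind (i = LS) + ind (LS = LS)) :=
                le_add_of_nonneg_left hQ0
        · have := hEu n G hn4 hij hiL hjL (k+1)
          rw [ind_false hij, ind_false hiL, ind_false hjL]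
          rw [← hAdef] at this
          linarith
  have hinner : ∀ i : Fin (n+1),
      ∑ j : Fin (n+1), ((A ^ 2 + 10 * A * NV)
          + A * (ind (i = j) + ind (i = LS) + ind (j = LS)))
        = ((n:ℝ)+1) * (A ^ 2 + 10 * A * NV)
          + A * (2 + ((n:ℝ)+1) * ind (i = LS)) := by
    intro i
    rw [Finset.sum_add_distrib]
    rw [Finset.sum_const, Finset.card_univ, Fintype.card_fin, nsmul_eq_mul]
    rw [← Finset.mul_sum]
    rw [Finset.sum_add_distrib, Finset.sum_add_distrib]
    rw [sum_ind_eq_one'' i, sum_ind_eq_one LS]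
    rw [Finset.sum_const, Finset.card_univ, Fintype.card_fin, nsmul_eq_mul]
    push_cast
    ring
  calc ∑ i : Fin (n+1), ∑ j : Fin (n+1),
        EE n G (fun σ => ind (σ i = i ∧ σ j = j)) (k+1)
      ≤ ∑ i : Fin (n+1), ∑ j : Fin (n+1), ((A ^ 2 + 10 * A * NV)
          + A * (ind (i = j) + ind (i = LS) + ind (j = LS))) :=
        Finset.sum_le_sum fun i _ => Finset.sum_le_sum fun j _ => hterm i j
    _ = ∑ i : Fin (n+1), (((n:ℝ)+1) * (A ^ 2 + 10 * A * NV)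
          + A * (2 + ((n:ℝ)+1) * ind (i = LS))) :=
        Finset.sum_congr rfl fun i _ => hinner i
    _ = ((n:ℝ)+1) ^ 2 * (A ^ 2 + 10 * A * NV) + 3 * ((n:ℝ)+1) * A := by
        rw [Finset.sum_add_distrib]
        rw [Finset.sum_const, Finset.card_univ, Fintype.card_fin, nsmul_eq_mul]
        rw [← Finset.mul_sum, Finset.sum_add_distrib]
        rw [Finset.sum_const, Finset.card_univ, Fintype.card_fin, nsmul_eq_mul]
        rw [← Finset.mul_sum, sum_ind_eq_one LS]
        push_cast
        ring

end Moments

section TV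

variable {H : Type*} [Group H] [Fintype H]

lemma tvU_le_one' {μ : H → ℝ} (h0 : ∀ x, 0 ≤ μ x) (h1 : ∑ x : H, μ x = 1) :
    tvU μ ≤ 1 := by
  unfold tvU
  have hcard : (0:ℝ) < (Fintype.card H : ℝ) := by exact_mod_cast Fintype.card_pos
  have hpt : ∀ x : H, |μ x - 1 / (Fintype.card H : ℝ)|
      ≤ μ x + 1 / (Fintype.card H : ℝ) := by
    intro x
    rw [abs_le]
    constructor
    · have := h0 x
      have : (0:ℝ) < 1 / (Fintype.card H : ℝ) := by positivity
      linarith [h0 x]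
    · have : (0:ℝ) < 1 / (Fintype.card H : ℝ) := by positivity
      linarith
  have hsum : ∑ x : H, |μ x - 1 / (Fintype.card H : ℝ)|
      ≤ ∑ x : H, (μ x + 1 / (Fintype.card H : ℝ)) :=
    Finset.sum_le_sum fun x _ => hpt x
  have h2 : ∑ x : H, (μ x + 1 / (Fintype.card H : ℝ)) = 2 := by
    rw [Finset.sum_add_distrib, h1, Finset.sum_const, Finset.card_univ, nsmul_eq_mul]
    field_simp
    norm_num
  linarith

lemma tvU_ge {μ : H → ℝ} (h1 : ∑ x : H, μ x = 1) (S : Finset H) :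
    (∑ x ∈ S, μ x) - (∑ x ∈ S, 1 / (Fintype.card H : ℝ)) ≤ tvU μ := by
  have hcard : (0:ℝ) < (Fintype.card H : ℝ) := by exact_mod_cast Fintype.card_pos
  set D : H → ℝ := fun x => μ x - 1 / (Fintype.card H : ℝ) with hD
  have htot : ∑ x : H, D x = 0 := by
    rw [hD, Finset.sum_sub_distrib, h1, Finset.sum_const, Finset.card_univ, nsmul_eq_mul]
    field_simp
    ring
  have hsplit : ∑ x ∈ S, D x + ∑ x ∈ Sᶜ, D x = 0 := by
    rw [Finset.sum_add_sum_compl]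
    exact htot
  have hS : ∑ x ∈ S, D x ≤ ∑ x ∈ S, |D x| :=
    Finset.sum_le_sum fun x _ => le_abs_self _
  have hSc : ∑ x ∈ S, D x ≤ ∑ x ∈ Sᶜ, |D x| := by
    have : ∑ x ∈ S, D x = ∑ x ∈ Sᶜ, (- D x) := by
      rw [Finset.sum_neg_distrib]
      linarith
    rw [this]
    exact Finset.sum_le_sum fun x _ => neg_le_abs _
  have habs : ∑ x ∈ S, |D x| + ∑ x ∈ Sᶜ, |D x| = ∑ x : H, |D x| :=
    Finset.sum_add_sum_compl S _
  have hDsum : (∑ x ∈ S, μ x) - (∑ x ∈ S, 1 / (Fintype.card H : ℝ)) = ∑ x ∈ S, D x := by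
    rw [hD, Finset.sum_sub_distrib]
  rw [hDsum]
  unfold tvU
  rw [← hD]
  linarith

end TV

section FixCount

variable (n : ℕ) (G : Type*) [Group G] [Fintype G]

lemma sum_fix_slice (i j : Fin (n+1)) :
    ∑ x : Wreath (n+1) G, ind (x.right i = j)
      = ∑ x : Wreath (n+1) G, ind (x.right i = i) := by
  have hswap : ∀ z : Fin (n+1), (Equiv.swap i j z = j ↔ z = i) := by
    intro z
    constructor
    · intro h
      apply (Equiv.swap i j).injective
      rw [h, Equiv.swap_apply_left]
    · intro h
      rw [h]
      exact Equiv.swap_apply_left i j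
  have := Equiv.sum_comp (Equiv.mulLeft (tr i j : Wreath (n+1) G))
    (fun x : Wreath (n+1) G => ind (x.right i = j))
  rw [← this]
  refine Finset.sum_congr rfl fun y _ => ?_
  have hr : ((Equiv.mulLeft (tr i j : Wreath (n+1) G)) y).right
      = Equiv.swap i j * y.right := by
    rw [Equiv.coe_mulLeft]
    rw [SemidirectProduct.mul_right]
    rfl
  rw [hr]
  exact ind_congr (by rw [Equiv.Perm.mul_apply]; exact hswap (y.right i))

lemma sum_fix_total :
    ∑ x : Wreath (n+1) G, fixF n x.right
      = (Fintype.card (Wreath (n+1) G) : ℝ) := by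
  unfold fixF
  rw [Finset.sum_comm]
  have hslice : ∀ i : Fin (n+1), ∑ x : Wreath (n+1) G, ind (x.right i = i)
      = (Fintype.card (Wreath (n+1) G) : ℝ) / ((n:ℝ)+1) := by
    intro i
    have hN : (0:ℝ) < (n:ℝ)+1 := by positivity
    have h1 : ((n:ℝ)+1) * ∑ x : Wreath (n+1) G, ind (x.right i = i)
        = (Fintype.card (Wreath (n+1) G) : ℝ) := by
      calc ((n:ℝ)+1) * ∑ x : Wreath (n+1) G, ind (x.right i = i)
          = ∑ j : Fin (n+1), ∑ x : Wreath (n+1) G, ind (x.right i = j) := by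
            rw [Finset.sum_congr rfl fun j _ => sum_fix_slice n G i j]
            rw [Finset.sum_const, Finset.card_univ, Fintype.card_fin, nsmul_eq_mul]
            push_cast
            ring
        _ = ∑ x : Wreath (n+1) G, ∑ j : Fin (n+1), ind (x.right i = j) :=
            Finset.sum_comm
        _ = ∑ x : Wreath (n+1) G, (1:ℝ) :=
            Finset.sum_congr rfl fun x _ => sum_ind_eq_one'' (x.right i)
        _ = (Fintype.card (Wreath (n+1) G) : ℝ) := by
            rw [Finset.sum_const, Finset.card_univ, nsmul_eq_mul, mul_one]
    field_simp at h1 ⊢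
    linarith [h1]
  rw [Finset.sum_congr rfl fun i _ => hslice i]
  rw [Finset.sum_const, Finset.card_univ, Fintype.card_fin, nsmul_eq_mul]
  have hN : ((n:ℝ)+1) ≠ 0 := by positivity
  push_cast
  field_simp

end FixCount

section Main

variable (n : ℕ) (G : Type*) [Group G] [Fintype G]

local notation "NV" => ((((n:ℝ)+1))⁻¹)

set_option maxHeartbeats 1000000 in
lemma tv_main (hn4 : 3 ≤ n) (k : ℕ)
    (ht : 2 ≤ ((n:ℝ)+1) * (1 - NV) ^ (k+1)) :
    1 - 500 / (((n:ℝ)+1) * (1 - NV) ^ (k+1))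
      ≤ tvU (convPow (warpP n G) (k+1)) := by
  have hN : (0:ℝ) < (n:ℝ)+1 := by positivity
  have hn3 : (3:ℝ) ≤ (n:ℝ) := by exact_mod_cast hn4
  set ρ : ℝ := (1 - NV) ^ (k+1) with hρ
  set t : ℝ := ((n:ℝ)+1) * ρ with htdef
  have htpos : (0:ℝ) < t := by linarith
  have hρ_pos : 0 < ρ := by
    have : (0:ℝ) < 1 - NV := by
      have h1 : NV < 1 := by
        rw [inv_lt_one_iff₀]
        right
        linarith
      linarith
    positivity
  have hρ_le_one : ρ ≤ 1 := by
    rw [hρ]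
    apply pow_le_one₀
    · have := NV_le_one n; linarith [NV_pos n]
    · linarith [NV_pos n]
  set L : ℝ := (n:ℝ) * ρ with hLdef
  have hL_eq : L = t - ρ := by rw [hLdef, htdef]; ring
  have hLt2 : t / 2 ≤ L := by rw [hL_eq]; linarith
  have hLpos : 0 < L := by linarith
  set μ := convPow (warpP n G) (k+1) with hμ
  set m : ℝ := EE n G (fixF n) (k+1) with hm
  set E2 : ℝ := EE n G (fun σ => (fixF n σ) ^ 2) (k+1) with hE2
  set A : ℝ := Aseq n (k+1) with hA
  have hLm : L ≤ m := EE_fix_lb n G (k+1)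
  have hAub : A ≤ ρ + NV := Aseq_ub n (k+1)
  have hNA : ((n:ℝ)+1) * A ≤ t + 1 := by
    have := mul_le_mul_of_nonneg_left hAub (le_of_lt hN)
    have hNV1 : ((n:ℝ)+1) * NV = 1 := by field_simp
    calc ((n:ℝ)+1) * A ≤ ((n:ℝ)+1) * (ρ + NV) := this
      _ = t + 1 := by rw [mul_add, hNV1, htdef]
  have hA0 : 0 ≤ A := Aseq_nonneg n (k+1)
  have hNA0 : 0 ≤ ((n:ℝ)+1) * A := mul_nonneg (le_of_lt hN) hA0
  have hE2ub : E2 ≤ t^2 + 15*t + 14 := by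
    have h1 := EE_fixsq_ub n G hn4 k
    rw [← hA, ← hE2] at h1
    have hNV1 : ((n:ℝ)+1) * NV = 1 := by field_simp
    have heq : ((n:ℝ)+1)^2 * (A^2 + 10*A*NV) + 3*((n:ℝ)+1)*A
        = (((n:ℝ)+1)*A)^2 + 10*(((n:ℝ)+1)*A)*(((n:ℝ)+1)*NV) + 3*(((n:ℝ)+1)*A) := by
      ring
    rw [heq, hNV1] at h1
    have : (((n:ℝ)+1)*A)^2 + 10*(((n:ℝ)+1)*A)*1 + 3*(((n:ℝ)+1)*A)
        ≤ (t+1)^2 + 13*(t+1) := by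
      nlinarith [hNA, hNA0]
    calc E2 ≤ (t+1)^2 + 13*(t+1) := le_trans h1 this
      _ = t^2 + 15*t + 14 := by ring
  -- the good event
  set S : Finset (Wreath (n+1) G) :=
    Finset.univ.filter (fun x => L/2 ≤ fixF n x.right) with hSdef
  have hmass : ∑ x : Wreath (n+1) G, μ x = 1 := convPow_mass (k+1)
  have hμ0 : ∀ x, 0 ≤ μ x := fun x => convPow_nonneg (k+1) x
  -- variance identity
  have hvar : ∑ x : Wreath (n+1) G, μ x * (fixF n x.right - m)^2 = E2 - m^2 := by
    have hpt : ∀ x : Wreath (n+1) G, μ x * (fixF n x.right - m)^2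
        = μ x * (fixF n x.right)^2 - (2*m) * (μ x * fixF n x.right) + m^2 * μ x := by
      intro x; ring
    rw [Finset.sum_congr rfl fun x _ => hpt x]
    rw [Finset.sum_add_distrib, Finset.sum_sub_distrib]
    rw [← Finset.mul_sum, ← Finset.mul_sum, hmass]
    have e1 : ∑ x : Wreath (n+1) G, μ x * (fixF n x.right)^2 = E2 := rfl
    have e2 : ∑ x : Wreath (n+1) G, μ x * fixF n x.right = m := rfl
    rw [e1, e2]
    ring
  -- Chebyshev
  have hcheb : ∑ x ∈ Sᶜ, μ x ≤ (E2 - m^2) / (L/2)^2 := by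
    have hL2pos : (0:ℝ) < (L/2)^2 := by positivity
    have hpt : ∀ x ∈ Sᶜ, μ x ≤ μ x * ((fixF n x.right - m)^2 / (L/2)^2) := by
      intro x hx
      rw [Finset.mem_compl, hSdef, Finset.mem_filter] at hx
      push_neg at hx
      have hfix : fixF n x.right < L/2 := hx (Finset.mem_univ x)
      have hdist : L/2 ≤ m - fixF n x.right := by linarith
      have hsq : (L/2)^2 ≤ (fixF n x.right - m)^2 := by
        have h1 : (L/2)^2 ≤ (m - fixF n x.right)^2 := by
          apply pow_le_pow_left₀ (by linarith) hdist
        have h2 : (m - fixF n x.right)^2 = (fixF n x.right - m)^2 := by ring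
        linarith
      have hratio : (1:ℝ) ≤ (fixF n x.right - m)^2 / (L/2)^2 :=
        (one_le_div hL2pos).mpr hsq
      calc μ x = μ x * 1 := (mul_one _).symm
        _ ≤ μ x * ((fixF n x.right - m)^2 / (L/2)^2) :=
            mul_le_mul_of_nonneg_left hratio (hμ0 x)
    calc ∑ x ∈ Sᶜ, μ x
        ≤ ∑ x ∈ Sᶜ, μ x * ((fixF n x.right - m)^2 / (L/2)^2) :=
          Finset.sum_le_sum hpt
      _ ≤ ∑ x : Wreath (n+1) G, μ x * ((fixF n x.right - m)^2 / (L/2)^2) := by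
          apply Finset.sum_le_sum_of_subset_of_nonneg (Finset.subset_univ _)
          intro x _ _
          exact mul_nonneg (hμ0 x) (div_nonneg (sq_nonneg _) (le_of_lt hL2pos))
      _ = (∑ x : Wreath (n+1) G, μ x * (fixF n x.right - m)^2) / (L/2)^2 := by
          rw [Finset.sum_div]
          exact Finset.sum_congr rfl fun x _ => (mul_div_assoc _ _ _).symm
      _ = (E2 - m^2) / (L/2)^2 := by rw [hvar]
  -- uniform measure of S
  have hcardW : (0:ℝ) < (Fintype.card (Wreath (n+1) G) : ℝ) := by
    exact_mod_cast Fintype.card_pos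
  have hunif : ∑ x ∈ S, 1 / (Fintype.card (Wreath (n+1) G) : ℝ) ≤ 2 / L := by
    have hpt : ∀ x ∈ S, 1 / (Fintype.card (Wreath (n+1) G) : ℝ)
        ≤ (2/L) * (fixF n x.right / (Fintype.card (Wreath (n+1) G) : ℝ)) := by
      intro x hx
      rw [hSdef, Finset.mem_filter] at hx
      have hfix : L/2 ≤ fixF n x.right := hx.2
      rw [div_le_iff₀ hcardW]  -- might need ge_div...
      have h2 : (2/L) * (L/2) ≤ (2/L) * fixF n x.right :=
        mul_le_mul_of_nonneg_left hfix (by positivity)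
      have h3 : (2/L) * (L/2) = 1 := by field_simp
      calc (1:ℝ) = (2/L) * (L/2) := h3.symm
        _ ≤ (2/L) * fixF n x.right := h2
        _ = (2/L) * (fixF n x.right / (Fintype.card (Wreath (n+1) G) : ℝ))
              * (Fintype.card (Wreath (n+1) G) : ℝ) := by
            field_simp
    have hfix0 : ∀ x : Wreath (n+1) G, 0 ≤ fixF n x.right := by
      intro x
      exact Finset.sum_nonneg fun i _ => ind_nonneg _
    calc ∑ x ∈ S, 1 / (Fintype.card (Wreath (n+1) G) : ℝ)
        ≤ ∑ x ∈ S, (2/L) * (fixF n x.right / (Fintype.card (Wreath (n+1) G) : ℝ)) :=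
          Finset.sum_le_sum hpt
      _ ≤ ∑ x : Wreath (n+1) G,
            (2/L) * (fixF n x.right / (Fintype.card (Wreath (n+1) G) : ℝ)) := by
          apply Finset.sum_le_sum_of_subset_of_nonneg (Finset.subset_univ _)
          intro x _ _
          exact mul_nonneg (by positivity) (div_nonneg (hfix0 x) (le_of_lt hcardW))
      _ = (2/L) * ((∑ x : Wreath (n+1) G, fixF n x.right)
            / (Fintype.card (Wreath (n+1) G) : ℝ)) := by
          rw [Finset.sum_div, Finset.mul_sum]
      _ = 2 / L := by
          rw [sum_fix_total n G]
          field_simp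
  -- put it together
  have hμS : 1 - (E2 - m^2) / (L/2)^2 ≤ ∑ x ∈ S, μ x := by
    have := Finset.sum_add_sum_compl S μ
    rw [hmass] at this
    linarith
  have htv := tvU_ge (μ := μ) hmass S
  -- numeric bounds
  have hLt1 : t - 1 ≤ L := by rw [hL_eq]; linarith
  clear_value ρ t L μ m E2 A S
  have hm2 : L^2 ≤ m^2 := pow_le_pow_left₀ (le_of_lt hLpos) hLm 2
  have hnum1 : (E2 - m^2) / (L/2)^2 ≤ 384 / t := by
    have hL2 : (t-1)^2 ≤ L^2 := pow_le_pow_left₀ (by linarith only [ht]) hLt1 2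
    have hE2L : E2 - m^2 ≤ 24 * t := by linarith only [hE2ub, hm2, hL2, ht]
    have hd : (0:ℝ) < (t/4)^2 := by positivity
    have hdle : (t/4)^2 ≤ (L/2)^2 := by
      have h1 : t/4 ≤ L/2 := by linarith only [hLt2]
      exact pow_le_pow_left₀ (by linarith only [ht]) h1 2
    calc (E2 - m^2) / (L/2)^2 ≤ (24*t) / (t/4)^2 :=
          div_le_div₀ (by positivity) hE2L hd hdle
      _ = 384 / t := by
          field_simp
          ring
  have hnum2 : 2 / L ≤ 4 / t := by
    calc 2 / L ≤ 2 / (t/2) := by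
          apply div_le_div_of_nonneg_left (by norm_num) (by linarith) hLt2
      _ = 4 / t := by
          field_simp
          ring
  have hfinal : 1 - 500 / t ≤ (∑ x ∈ S, μ x)
      - ∑ x ∈ S, 1 / (Fintype.card (Wreath (n+1) G) : ℝ) := by
    have h384 : 384 / t + 4 / t ≤ 500 / t := by
      rw [← add_div]
      exact (div_le_div_iff_of_pos_right htpos).mpr (by norm_num)
    linarith
  linarith

end Main

section Limit

open Filter

/-- the quantity `N θ^k` at the cutoff time -/
def tfun (ε : ℝ) (n : ℕ) : ℝ :=
  ((n:ℝ)+1) * (1 - (((n:ℝ)+1))⁻¹)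
    ^ (⌊(1 - ε) * (((n : ℝ) + 1) * Real.log ((n : ℝ) + 1))⌋₊)

lemma tfun_tendsto {ε : ℝ} (hε0 : 0 < ε) (hε1 : ε < 1) :
    Tendsto (tfun ε) atTop atTop := by
  have hhalf : 0 < ε/2 := by linarith
  have hNlim : Tendsto (fun n : ℕ => ((n:ℝ)+1)) atTop atTop :=
    tendsto_atTop_add_const_right _ 1 tendsto_natCast_atTop_atTop
  have hloglim : Tendsto (fun n : ℕ => Real.log ((n:ℝ)+1)) atTop atTop :=
    Real.tendsto_log_atTop.comp hNlim
  have hexp : Tendsto (fun n : ℕ => Real.exp ((ε/2) * Real.log ((n:ℝ)+1))) atTop atTop :=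
    Real.tendsto_exp_atTop.comp (hloglim.const_mul_atTop hhalf)
  have hsm_lim : Tendsto (fun n : ℕ => (1-ε) * (1/(n:ℝ))) atTop (nhds 0) := by
    have h0 := tendsto_one_div_atTop_nhds_zero_nat (𝕜 := ℝ)
    have := h0.const_mul (1-ε)
    simpa using this
  have hsm_ev : ∀ᶠ n : ℕ in atTop, (1-ε) * (1/(n:ℝ)) ≤ ε/2 :=
    hsm_lim.eventually (eventually_le_nhds hhalf)
  have hev : ∀ᶠ n : ℕ in atTop,
      Real.exp ((ε/2) * Real.log ((n:ℝ)+1)) ≤ tfun ε n := by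
    filter_upwards [eventually_ge_atTop 1, hsm_ev] with n h1 hsm
    have hn1 : (1:ℝ) ≤ (n:ℝ) := by exact_mod_cast h1
    have hNpos : (0:ℝ) < (n:ℝ)+1 := by linarith
    have hnpos : (0:ℝ) < (n:ℝ) := by linarith
    set N : ℝ := (n:ℝ)+1 with hNdef
    set k : ℕ := ⌊(1 - ε) * (N * Real.log N)⌋₊ with hkdef
    have hθ : 1 - N⁻¹ = (n:ℝ) / N := by
      rw [hNdef]
      field_simp
      ring
    have hθpos : (0:ℝ) < 1 - N⁻¹ := by
      rw [hθ]; positivity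
    have hlogN0 : 0 ≤ Real.log N := Real.log_nonneg (by linarith)
    -- `-log θ ≤ 1/n`
    have hlogθ : -(Real.log (1 - N⁻¹)) ≤ 1/(n:ℝ) := by
      have h2 : Real.log (N / (n:ℝ)) ≤ N/(n:ℝ) - 1 :=
        Real.log_le_sub_one_of_pos (by positivity)
      have h3 : Real.log (N / (n:ℝ)) = Real.log N - Real.log (n:ℝ) :=
        Real.log_div (by linarith) (by linarith)
      have h4 : Real.log (1 - N⁻¹) = Real.log (n:ℝ) - Real.log N := by
        rw [hθ, Real.log_div (by linarith) (by linarith)]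
      have h5 : N/(n:ℝ) - 1 = 1/(n:ℝ) := by
        rw [hNdef]; field_simp; ring
      linarith
    have hk_ub : (k:ℝ) ≤ (1 - ε) * (N * Real.log N) := by
      apply Nat.floor_le
      have : 0 ≤ N * Real.log N := mul_nonneg (by linarith) hlogN0
      nlinarith
    -- exponent bound
    have hmain : (ε/2) * Real.log N ≤ Real.log N + (k:ℝ) * Real.log (1 - N⁻¹) := by
      have hθle1 : 1 - N⁻¹ ≤ 1 := by
        have : (0:ℝ) < N⁻¹ := by positivity
        linarith
      have hlognn : 0 ≤ -(Real.log (1 - N⁻¹)) := by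
        have := Real.log_nonpos (le_of_lt hθpos) hθle1
        linarith
      have hbnn : 0 ≤ (1 - ε) * (N * Real.log N) := by
        apply mul_nonneg (by linarith)
        exact mul_nonneg (by linarith) hlogN0
      have hstep1 : (k:ℝ) * (-(Real.log (1 - N⁻¹))) ≤
          ((1 - ε) * (N * Real.log N)) * (1/(n:ℝ)) := by
        apply mul_le_mul hk_ub hlogθ hlognn hbnn
      have hstep2 : ((1 - ε) * (N * Real.log N)) * (1/(n:ℝ))
          = ((1-ε) + (1-ε) * (1/(n:ℝ))) * Real.log N := by
        rw [hNdef]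
        field_simp
      have hstep3 : ((1-ε) + (1-ε) * (1/(n:ℝ))) * Real.log N
          ≤ (1 - ε/2) * Real.log N := by
        apply mul_le_mul_of_nonneg_right _ hlogN0
        linarith
      nlinarith [hstep1, hstep2, hstep3]
    have htfun : tfun ε n = Real.exp (Real.log N + (k:ℝ) * Real.log (1 - N⁻¹)) := by
      rw [Real.exp_add, Real.exp_nat_mul, Real.exp_log hNpos, Real.exp_log hθpos]
      rfl
    rw [htfun]
    exact Real.exp_le_exp.mpr hmain
  exact tendsto_atTop_mono' atTop hev hexp

end Limit

end WTS

open Filter in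
/-- Total variation cutoff, lower-bound side. Let `{G_n}` be a sequence of non-trivial
finite groups and write `N = n + 1` for the number of positions. For any `ε ∈ (0, 1)`,
the total variation distance `‖P^{*⌊(1−ε) N log N⌋} − U‖_TV` of the warp-transpose top
with random shuffle from uniform converges to `1` as `n → ∞`. -/
theorem warpTranspose_tv_cutoff_lower (G : ℕ → Type) [∀ n, Group (G n)]
    [∀ n, Fintype (G n)] [∀ n, Nontrivial (G n)] (ε : ℝ) (hε0 : 0 < ε) (hε1 : ε < 1) :
    Tendsto
      (fun n : ℕ =>
        tvU (convPow (warpP n (G n))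
          (⌊(1 - ε) * (((n : ℝ) + 1) * Real.log ((n : ℝ) + 1))⌋₊)))
      atTop (nhds 1) := by
  have htends : Tendsto (WTS.tfun ε) atTop atTop := WTS.tfun_tendsto hε0 hε1
  have hdiv : Tendsto (fun n : ℕ => 1 - 500 / WTS.tfun ε n) atTop (nhds 1) := by
    have h0 : Tendsto (fun n : ℕ => (500:ℝ) / WTS.tfun ε n) atTop (nhds 0) :=
      Tendsto.div_atTop tendsto_const_nhds htends
    have h1 := h0.const_sub 1
    simpa using h1
  have hub : ∀ᶠ n : ℕ in atTop,
      tvU (convPow (warpP n (G n))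
        (⌊(1 - ε) * (((n : ℝ) + 1) * Real.log ((n : ℝ) + 1))⌋₊)) ≤ 1 :=
    Eventually.of_forall fun n =>
      WTS.tvU_le_one' (fun x => WTS.convPow_nonneg _ x) (WTS.convPow_mass _)
  have harg : Tendsto
      (fun n : ℕ => (1 - ε) * (((n:ℝ)+1) * Real.log ((n:ℝ)+1))) atTop atTop := by
    have hNlim : Tendsto (fun n : ℕ => ((n:ℝ)+1)) atTop atTop :=
      tendsto_atTop_add_const_right _ 1 tendsto_natCast_atTop_atTop
    have hloglim : Tendsto (fun n : ℕ => Real.log ((n:ℝ)+1)) atTop atTop :=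
      Real.tendsto_log_atTop.comp hNlim
    exact (hNlim.atTop_mul_atTop₀ hloglim).const_mul_atTop (by linarith)
  have hk1 : ∀ᶠ n : ℕ in atTop,
      1 ≤ ⌊(1 - ε) * (((n : ℝ) + 1) * Real.log ((n : ℝ) + 1))⌋₊ :=
    (harg.eventually_ge_atTop 1).mono fun n hn => Nat.le_floor (by exact_mod_cast hn)
  have hlb : ∀ᶠ n : ℕ in atTop,
      1 - 500 / WTS.tfun ε n ≤ tvU (convPow (warpP n (G n))
        (⌊(1 - ε) * (((n : ℝ) + 1) * Real.log ((n : ℝ) + 1))⌋₊)) := by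
    filter_upwards [eventually_ge_atTop 3, htends.eventually_ge_atTop 2, hk1]
      with n h3 h2 hk
    obtain ⟨k, hk'⟩ : ∃ k, ⌊(1 - ε) * (((n : ℝ) + 1) * Real.log ((n : ℝ) + 1))⌋₊ = k + 1 :=
      ⟨⌊(1 - ε) * (((n : ℝ) + 1) * Real.log ((n : ℝ) + 1))⌋₊ - 1, by omega⟩
    have htf : WTS.tfun ε n = ((n:ℝ)+1) * (1 - (((n:ℝ)+1))⁻¹) ^ (k+1) := by
      rw [show WTS.tfun ε n = ((n:ℝ)+1) * (1 - (((n:ℝ)+1))⁻¹)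
        ^ (⌊(1 - ε) * (((n : ℝ) + 1) * Real.log ((n : ℝ) + 1))⌋₊) from rfl, hk']
    rw [htf, hk']
    refine WTS.tv_main n (G n) h3 k ?_
    rw [← htf]
    exact h2
  exact tendsto_of_tendsto_of_tendsto_of_le_of_le' hdiv tendsto_const_nhds hlb hub
end
end
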